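/- arXiv:2108.01263 — 7 statements merged into one kernel-verified Lean document; each statement's English description precedes it below -/
import Mathlib

section
/- The twist polynomial is multiplicative over direct sums: for delta-matroids D and D̃ on disjoint ground sets, ∂w_{D ⊕ D̃}(z) = ∂w_D(z) · ∂w_{D̃}(z). -/
open Finset

variable {α : Type*}

/-- The twist of a family of feasible sets by a set `A`:
`{A Δ X : X ∈ F}`. -/
def twistF [DecidableEq α] (A : Finset α) (F : Finset (Finset α)) : Finset (Finset α) :=
  F.image (fun X => symmDiff A X)

/-- `D = (E, F)` is a delta-matroid: `F` is nonempty, consists of subsets of `E`,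
and satisfies the symmetric exchange axiom. -/
def IsDeltaMatroid [DecidableEq α] (E : Finset α) (F : Finset (Finset α)) : Prop :=
  F.Nonempty ∧ (∀ X ∈ F, X ⊆ E) ∧
    ∀ X ∈ F, ∀ Y ∈ F, ∀ u ∈ symmDiff X Y,
      ∃ v ∈ symmDiff X Y, symmDiff X {u, v} ∈ F

/-- The width of a set system: max feasible size minus min feasible size. -/
def widthF (F : Finset (Finset α)) : ℕ :=
  (F.image Finset.card).max.getD 0 - (F.image Finset.card).min.getD 0

/-- The twist polynomial `∑_{A ⊆ E} z^{w(D*A)}`, as a polynomial over ℤ. -/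
noncomputable def twistPoly [DecidableEq α] (E : Finset α) (F : Finset (Finset α)) :
    Polynomial ℤ :=
  ∑ A ∈ E.powerset, Polynomial.X ^ widthF (twistF A F)

/-- The direct sum of two feasible families: `{F ∪ F̃ : F ∈ 𝓕, F̃ ∈ 𝓕̃}`. -/
def dSum [DecidableEq α] (F Ft : Finset (Finset α)) : Finset (Finset α) :=
  (F ×ˢ Ft).image (fun p => p.1 ∪ p.2)

lemma symmDiff_union_union' [DecidableEq α] {E Et A B X Y : Finset α}
    (hdisj : Disjoint E Et) (hA : A ⊆ E) (hB : B ⊆ Et) (hX : X ⊆ E) (hY : Y ⊆ Et) :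
    symmDiff (A ∪ B) (X ∪ Y) = symmDiff A X ∪ symmDiff B Y := by
  ext a
  simp only [Finset.mem_symmDiff, Finset.mem_union]
  by_cases hE : a ∈ E
  · have h1 : a ∉ B := fun h => Finset.disjoint_left.mp hdisj hE (hB h)
    have h2 : a ∉ Y := fun h => Finset.disjoint_left.mp hdisj hE (hY h)
    tauto
  · have h1 : a ∉ A := fun h => hE (hA h)
    have h2 : a ∉ X := fun h => hE (hX h)
    tauto

lemma twistF_dSum' [DecidableEq α] {E Et : Finset α} {F Ft : Finset (Finset α)}
    (hdisj : Disjoint E Et) (hF : ∀ X ∈ F, X ⊆ E) (hFt : ∀ Y ∈ Ft, Y ⊆ Et)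
    {A B : Finset α} (hA : A ⊆ E) (hB : B ⊆ Et) :
    twistF (A ∪ B) (dSum F Ft) = dSum (twistF A F) (twistF B Ft) := by
  ext Z
  simp only [twistF, dSum, mem_image, mem_product, Prod.exists]
  constructor
  · rintro ⟨W, ⟨X, Y, ⟨hX, hY⟩, rfl⟩, rfl⟩
    exact ⟨_, _, ⟨⟨X, hX, rfl⟩, ⟨Y, hY, rfl⟩⟩,
      (symmDiff_union_union' hdisj hA hB (hF X hX) (hFt Y hY)).symm⟩
  · rintro ⟨P, Q, ⟨⟨X, hX, rfl⟩, ⟨Y, hY, rfl⟩⟩, rfl⟩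
    exact ⟨X ∪ Y, ⟨X, Y, ⟨hX, hY⟩, rfl⟩,
      symmDiff_union_union' hdisj hA hB (hF X hX) (hFt Y hY)⟩

lemma widthF_eq_max'_sub_min' [DecidableEq α] (F : Finset (Finset α)) (h : F.Nonempty) :
    widthF F = (F.image Finset.card).max' (h.image _) - (F.image Finset.card).min' (h.image _) := by
  unfold widthF
  rw [← Finset.coe_max' (h.image _), ← Finset.coe_min' (h.image _)]
  rfl

lemma widthF_dSum' [DecidableEq α] {F Ft : Finset (Finset α)}
    (hF : F.Nonempty) (hFt : Ft.Nonempty)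
    (hdisj : ∀ X ∈ F, ∀ Y ∈ Ft, Disjoint X Y) :
    widthF (dSum F Ft) = widthF F + widthF Ft := by
  have hS : (dSum F Ft).Nonempty := by
    obtain ⟨X, hX⟩ := hF
    obtain ⟨Y, hY⟩ := hFt
    exact ⟨X ∪ Y, mem_image.mpr ⟨(X, Y), mem_product.mpr ⟨hX, hY⟩, rfl⟩⟩
  rw [widthF_eq_max'_sub_min' _ hS, widthF_eq_max'_sub_min' _ hF, widthF_eq_max'_sub_min' _ hFt]
  have hcard : ∀ Z ∈ dSum F Ft, ∃ X ∈ F, ∃ Y ∈ Ft, Z.card = X.card + Y.card := by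
    intro Z hZ
    simp only [dSum, mem_image, mem_product, Prod.exists] at hZ
    obtain ⟨X, Y, ⟨hX, hY⟩, rfl⟩ := hZ
    exact ⟨X, hX, Y, hY, card_union_of_disjoint (hdisj X hX Y hY)⟩
  have hmax : ((dSum F Ft).image Finset.card).max' (hS.image _) =
      (F.image Finset.card).max' (hF.image _) + (Ft.image Finset.card).max' (hFt.image _) := by
    apply le_antisymm
    · apply Finset.max'_le
      intro n hn
      obtain ⟨Z, hZ, rfl⟩ := mem_image.mp hn
      obtain ⟨X, hX, Y, hY, h⟩ := hcard Z hZ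
      rw [h]
      exact Nat.add_le_add (le_max' _ _ (mem_image_of_mem _ hX))
        (le_max' _ _ (mem_image_of_mem _ hY))
    · obtain ⟨X, hX, hXc⟩ := mem_image.mp (Finset.max'_mem _ (hF.image Finset.card))
      obtain ⟨Y, hY, hYc⟩ := mem_image.mp (Finset.max'_mem _ (hFt.image Finset.card))
      rw [← hXc, ← hYc, ← card_union_of_disjoint (hdisj X hX Y hY)]
      exact le_max' _ _ (mem_image_of_mem Finset.card
        (show X ∪ Y ∈ dSum F Ft from mem_image.mpr ⟨(X, Y), mem_product.mpr ⟨hX, hY⟩, rfl⟩))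
  have hmin : ((dSum F Ft).image Finset.card).min' (hS.image _) =
      (F.image Finset.card).min' (hF.image _) + (Ft.image Finset.card).min' (hFt.image _) := by
    apply le_antisymm
    · obtain ⟨X, hX, hXc⟩ := mem_image.mp (Finset.min'_mem _ (hF.image Finset.card))
      obtain ⟨Y, hY, hYc⟩ := mem_image.mp (Finset.min'_mem _ (hFt.image Finset.card))
      rw [← hXc, ← hYc, ← card_union_of_disjoint (hdisj X hX Y hY)]
      exact min'_le _ _ (mem_image_of_mem Finset.card
        (show X ∪ Y ∈ dSum F Ft from mem_image.mpr ⟨(X, Y), mem_product.mpr ⟨hX, hY⟩, rfl⟩))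
    · apply Finset.le_min'
      intro n hn
      obtain ⟨Z, hZ, rfl⟩ := mem_image.mp hn
      obtain ⟨X, hX, Y, hY, h⟩ := hcard Z hZ
      rw [h]
      exact Nat.add_le_add (min'_le _ _ (mem_image_of_mem _ hX))
        (min'_le _ _ (mem_image_of_mem _ hY))
  have h1' : (F.image Finset.card).min' (hF.image _) ≤ (F.image Finset.card).max' (hF.image _) :=
    Finset.min'_le _ _ (Finset.max'_mem _ _)
  have h2' : (Ft.image Finset.card).min' (hFt.image _) ≤ (Ft.image Finset.card).max' (hFt.image _) :=
    Finset.min'_le _ _ (Finset.max'_mem _ _)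
  omega

lemma symmDiff_subset_union' [DecidableEq α] (A X : Finset α) : symmDiff A X ⊆ A ∪ X := by
  intro a ha
  rw [Finset.mem_symmDiff] at ha
  rw [Finset.mem_union]
  tauto

/-- The twist polynomial is multiplicative over direct sums. -/
theorem twistPoly_dSum [DecidableEq α] (E Et : Finset α)
    (F Ft : Finset (Finset α)) (hD : IsDeltaMatroid E F) (hDt : IsDeltaMatroid Et Ft)
    (hdisj : Disjoint E Et) :
    twistPoly (E ∪ Et) (dSum F Ft) = twistPoly E F * twistPoly Et Ft := by
  obtain ⟨hFne, hFsub, -⟩ := hD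
  obtain ⟨hFtne, hFtsub, -⟩ := hDt
  unfold twistPoly
  rw [Finset.sum_mul_sum, ← Finset.sum_product']
  apply Finset.sum_nbij' (i := fun A => (A ∩ E, A ∩ Et)) (j := fun p => p.1 ∪ p.2)
  · intro A hA
    simp only [mem_product, mem_powerset]
    exact ⟨inter_subset_right, inter_subset_right⟩
  · intro p hp
    simp only [mem_product, mem_powerset] at hp
    exact mem_powerset.mpr (union_subset_union hp.1 hp.2)
  · intro A hA
    rw [mem_powerset] at hA
    rw [← Finset.inter_union_distrib_left]
    exact Finset.inter_eq_left.mpr hA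
  · intro p hp
    simp only [mem_product, mem_powerset] at hp
    have hd1 : Disjoint p.2 E := Finset.disjoint_left.mpr
      fun a ha => Finset.disjoint_right.mp hdisj (hp.2 ha)
    have hd2 : Disjoint p.1 Et := Finset.disjoint_left.mpr
      fun a ha => Finset.disjoint_left.mp hdisj (hp.1 ha)
    have h1 : (p.1 ∪ p.2) ∩ E = p.1 := by
      ext a
      simp only [mem_inter, mem_union]
      have := fun h : a ∈ p.2 => Finset.disjoint_left.mp hd1 h
      have := fun h : a ∈ p.1 => hp.1 h
      tauto
    have h2 : (p.1 ∪ p.2) ∩ Et = p.2 := by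
      ext a
      simp only [mem_inter, mem_union]
      have := fun h : a ∈ p.1 => Finset.disjoint_left.mp hd2 h
      have := fun h : a ∈ p.2 => hp.2 h
      tauto
    exact Prod.ext h1 h2
  · intro A hA
    rw [mem_powerset] at hA
    have hAeq : A = A ∩ E ∪ A ∩ Et := by
      rw [← Finset.inter_union_distrib_left]
      exact (Finset.inter_eq_left.mpr hA).symm
    have hAE : A ∩ E ⊆ E := inter_subset_right
    have hAEt : A ∩ Et ⊆ Et := inter_subset_right
    conv_lhs => rw [hAeq]
    rw [twistF_dSum' hdisj hFsub hFtsub hAE hAEt]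
    have hsub1 : ∀ X ∈ twistF (A ∩ E) F, X ⊆ E := by
      intro X hX
      obtain ⟨W, hW, rfl⟩ := mem_image.mp hX
      exact (symmDiff_subset_union' _ _).trans (union_subset hAE (hFsub W hW))
    have hsub2 : ∀ Y ∈ twistF (A ∩ Et) Ft, Y ⊆ Et := by
      intro Y hY
      obtain ⟨W, hW, rfl⟩ := mem_image.mp hY
      exact (symmDiff_subset_union' _ _).trans (union_subset hAEt (hFtsub W hW))
    have hn1 : (twistF (A ∩ E) F).Nonempty := hFne.image _
    have hn2 : (twistF (A ∩ Et) Ft).Nonempty := hFtne.image _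
    rw [widthF_dSum' hn1 hn2
      (fun X hX Y hY => hdisj.mono (hsub1 X hX) (hsub2 Y hY)), pow_add]
end

section
/- A delta-matroid D = (E, F) has constant twist polynomial (i.e., ∂w_D(z) = k for some integer k) if and only if |F| = 1. -/
open Finset

variable {α : Type*}

/-!
Twisting by `∅` shows that all feasible sets have the same size. If `X ≠ Y` were two of
them, pick `u ∈ X \ Y`: twisting by `{u}` shrinks `X` and grows `Y` by one element, so that
twist has width at least `2`.
-/

open scoped symmDiff

lemma card_eq_card_of_widthF_eq_zero {F : Finset (Finset α)} (h : widthF F = 0) {X Y : Finset α}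
    (hX : X ∈ F) (hY : Y ∈ F) : #X = #Y := by
  have hne : (F.image card).Nonempty := ⟨#X, mem_image_of_mem _ hX⟩
  have hle : (F.image card).max' hne ≤ (F.image card).min' hne := by
    rw [widthF, ← coe_max' hne, ← coe_min' hne] at h
    exact Nat.le_of_sub_eq_zero h
  have hXmax := le_max' _ _ (mem_image_of_mem card hX)
  have hXmin := min'_le _ _ (mem_image_of_mem card hX)
  have hYmax := le_max' _ _ (mem_image_of_mem card hY)
  have hYmin := min'_le _ _ (mem_image_of_mem card hY)
  omega

lemma widthF_singleton (X : Finset α) : widthF {X} = 0 := by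
  simp only [widthF, image_singleton, max_singleton, min_singleton]
  exact Nat.sub_self _

lemma twistF_empty [DecidableEq α] (F : Finset (Finset α)) : twistF ∅ F = F := by
  change F.image (⊥ ∆ ·) = F
  simp only [bot_symmDiff, image_id']

lemma card_singleton_symmDiff_of_mem [DecidableEq α] {u : α} {X : Finset α} (hu : u ∈ X) :
    #({u} ∆ X) + 1 = #X := by
  have hsub : {u} ⊆ X := singleton_subset_iff.mpr hu
  rw [symmDiff_of_le hsub, card_sdiff_of_subset hsub, card_singleton]
  have := card_pos.mpr ⟨u, hu⟩
  omega

lemma card_singleton_symmDiff_of_notMem [DecidableEq α] {u : α} {X : Finset α} (hu : u ∉ X) :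
    #({u} ∆ X) = #X + 1 := by
  rw [(disjoint_singleton_left.mpr hu).symmDiff_eq_sup, sup_eq_union, ← insert_eq,
    card_insert_of_notMem hu]

lemma widthF_twistF_singleton_ne_zero [DecidableEq α] {F : Finset (Finset α)} {X Y : Finset α}
    (hX : X ∈ F) (hY : Y ∈ F) (hXY : #X = #Y) {u : α} (huX : u ∈ X) (huY : u ∉ Y) :
    widthF (twistF {u} F) ≠ 0 := by
  intro h
  have := card_eq_card_of_widthF_eq_zero h (mem_image_of_mem _ hX) (mem_image_of_mem _ hY)
  have := card_singleton_symmDiff_of_mem huX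
  have := card_singleton_symmDiff_of_notMem huY
  omega

lemma card_le_one_of_forall_widthF_twistF_eq_zero [DecidableEq α] {E : Finset α}
    {F : Finset (Finset α)} (hFE : ∀ X ∈ F, X ⊆ E)
    (h : ∀ A ∈ E.powerset, widthF (twistF A F) = 0) : #F ≤ 1 := by
  rw [card_le_one]
  intro X hX Y hY
  have hXY : #X = #Y := by
    refine card_eq_card_of_widthF_eq_zero ?_ hX hY
    simpa only [twistF_empty] using h ∅ (empty_mem_powerset E)
  by_contra hne
  obtain ⟨u, huX, huY⟩ : ∃ u ∈ X, u ∉ Y :=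
    not_subset.mp fun hsub => hne (eq_of_subset_of_card_le hsub hXY.ge)
  exact widthF_twistF_singleton_ne_zero hX hY hXY huX huY
    (h {u} (mem_powerset.mpr (singleton_subset_iff.mpr (hFE X hX huX))))

/-- The twist polynomial of a delta-matroid is constant (i.e. every twist has width 0)
iff there is exactly one feasible set. -/
theorem twistPoly_constant_iff [DecidableEq α] (E : Finset α) (F : Finset (Finset α))
    (hD : IsDeltaMatroid E F) :
    (∀ A ∈ E.powerset, widthF (twistF A F) = 0) ↔ F.card = 1 := by
  obtain ⟨hne, hFE, -⟩ := hD
  constructor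
  · intro h
    exact le_antisymm (card_le_one_of_forall_widthF_twistF_eq_zero hFE h) (card_pos.mpr hne)
  · intro h A _
    obtain ⟨X, rfl⟩ := card_eq_one.mp h
    rw [twistF, image_singleton]
    exact widthF_singleton _
end

section
/- For a normal delta-matroid D = (E, F) (i.e., ∅ ∈ F) and any A ⊆ E, the width of the twist splits as w(D*A) = w(D|_A) + w(D|_{A^c}), where A^c = E \ A. -/
open Finset

variable {α : Type*}

/-- The restriction of a normal delta-matroid to A: feasible sets contained in A. -/
def restr [DecidableEq α] (A : Finset α) (F : Finset (Finset α)) : Finset (Finset α) :=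
  F.filter (fun X => X ⊆ A)

section Aux
variable [DecidableEq α]

lemma symm_erase_not_mem {A X : Finset α} {u : α} (hu : u ∈ X) (huA : u ∉ A) :
    symmDiff A (X.erase u) = (symmDiff A X).erase u := by
  ext x
  by_cases hx : x = u <;>
    simp [Finset.mem_symmDiff, Finset.mem_erase, hx, hu, huA]

lemma symm_erase_mem {A X : Finset α} {v : α} (hv : v ∈ X) (hvA : v ∈ A) :
    symmDiff A (X.erase v) = insert v (symmDiff A X) := by
  ext x
  by_cases hx : x = v <;>
    simp [Finset.mem_symmDiff, Finset.mem_erase, hx, hv, hvA]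

lemma symm_pair {X : Finset α} {u v : α} (hu : u ∈ X) (hv : v ∈ X) :
    symmDiff X {u, v} = (X.erase u).erase v := by
  ext x
  simp only [Finset.mem_symmDiff, Finset.mem_erase, Finset.mem_insert,
    Finset.mem_singleton]
  constructor
  · rintro (⟨hx, h⟩ | ⟨h, hx⟩)
    · push_neg at h; exact ⟨h.2, h.1, hx⟩
    · rcases h with rfl | rfl
      · exact absurd hu hx
      · exact absurd hv hx
  · rintro ⟨h1, h2, hx⟩; exact Or.inl ⟨hx, by push_neg; exact ⟨h2, h1⟩⟩

lemma mem_symm_of {A X : Finset α} {u : α} (hu : u ∈ X) (huA : u ∉ A) :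
    u ∈ symmDiff A X := by simp [Finset.mem_symmDiff, hu, huA]

lemma mem_symm_of' {A X : Finset α} {u : α} (hu : u ∈ A) (huX : u ∉ X) :
    u ∈ symmDiff A X := by simp [Finset.mem_symmDiff, hu, huX]

lemma not_mem_symm {A X : Finset α} {v : α} (hv : v ∈ X) (hvA : v ∈ A) :
    v ∉ symmDiff A X := by simp [Finset.mem_symmDiff, hv, hvA]

lemma card_symm_erase_not_mem {A X : Finset α} {u : α} (hu : u ∈ X) (huA : u ∉ A) :
    (symmDiff A (X.erase u)).card + 1 = (symmDiff A X).card := by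
  rw [symm_erase_not_mem hu huA, Finset.card_erase_add_one (mem_symm_of hu huA)]

lemma card_symm_erase_mem {A X : Finset α} {v : α} (hv : v ∈ X) (hvA : v ∈ A) :
    (symmDiff A (X.erase v)).card = (symmDiff A X).card + 1 := by
  rw [symm_erase_mem hv hvA, Finset.card_insert_of_notMem (not_mem_symm hv hvA)]

lemma symm_empty (X : Finset α) : symmDiff X ∅ = X := by
  rw [← Finset.bot_eq_empty, symmDiff_bot]

lemma min_reach {E : Finset α} {F : Finset (Finset α)}
    (hD : IsDeltaMatroid E F) (hnormal : ∅ ∈ F) (A : Finset α) :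
    ∀ X ∈ F, ∃ Y ∈ F, Y ⊆ A ∧ (symmDiff A Y).card ≤ (symmDiff A X).card := by
  obtain ⟨-, hE, hex⟩ := hD
  intro X hX
  generalize hn : (X \ A).card = n
  induction n using Nat.strong_induction_on generalizing X with
  | _ n ih =>
    by_cases hXA : X ⊆ A
    · exact ⟨X, hX, hXA, le_rfl⟩
    · obtain ⟨u, huX, huA⟩ : ∃ u, u ∈ X ∧ u ∉ A := by
        rw [Finset.not_subset] at hXA; exact hXA
      have hu' : u ∈ symmDiff X ∅ := by simpa [symm_empty] using huX
      obtain ⟨v, hv, hX'⟩ := hex X hX ∅ hnormal u hu'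
      have hvX : v ∈ X := by simpa [symm_empty] using hv
      rw [symm_pair huX hvX] at hX'
      set X' := (X.erase u).erase v with hX'def
      have hsub : X' ⊆ X.erase u := Finset.erase_subset _ _
      have hmeas : (X' \ A).card < n := by
        have h1 : X' \ A ⊆ (X \ A).erase u := by
          intro x hx
          simp only [Finset.mem_sdiff, hX'def, Finset.mem_erase] at hx ⊢
          exact ⟨hx.1.2.1, hx.1.2.2, hx.2⟩
        calc (X' \ A).card ≤ ((X \ A).erase u).card := Finset.card_le_card h1
          _ < (X \ A).card := Finset.card_erase_lt_of_mem (by simp [huX, huA])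
          _ = n := hn
      have hcard : (symmDiff A X').card ≤ (symmDiff A X).card := by
        rcases eq_or_ne v u with rfl | hvu
        · have : X' = X.erase v := by simp [hX'def]
          rw [this]
          have := card_symm_erase_not_mem hvX huA
          omega
        · have hvX1 : v ∈ X.erase u := Finset.mem_erase.2 ⟨hvu, hvX⟩
          have h1 := card_symm_erase_not_mem huX huA
          by_cases hvA : v ∈ A
          · have h2 := card_symm_erase_mem hvX1 hvA
            rw [← hX'def] at h2; omega
          · have h2 := card_symm_erase_not_mem hvX1 hvA
            rw [← hX'def] at h2; omega
      obtain ⟨Y, hY, hYA, hle⟩ := ih _ hmeas X' hX' rfl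
      exact ⟨Y, hY, hYA, hle.trans hcard⟩

lemma max_reach {E : Finset α} {F : Finset (Finset α)}
    (hD : IsDeltaMatroid E F) (hnormal : ∅ ∈ F) (A : Finset α) :
    ∀ X ∈ F, ∃ Y ∈ F, Y ∩ A = ∅ ∧ (symmDiff A X).card ≤ (symmDiff A Y).card := by
  obtain ⟨-, hE, hex⟩ := hD
  intro X hX
  generalize hn : (X ∩ A).card = n
  induction n using Nat.strong_induction_on generalizing X with
  | _ n ih =>
    by_cases hXA : X ∩ A = ∅
    · exact ⟨X, hX, hXA, le_rfl⟩
    · obtain ⟨u, hu⟩ := Finset.nonempty_iff_ne_empty.2 hXA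
      obtain ⟨huX, huA⟩ := Finset.mem_inter.1 hu
      have hu' : u ∈ symmDiff X ∅ := by simpa [symm_empty] using huX
      obtain ⟨v, hv, hX'⟩ := hex X hX ∅ hnormal u hu'
      have hvX : v ∈ X := by simpa [symm_empty] using hv
      rw [symm_pair huX hvX] at hX'
      set X' := (X.erase u).erase v with hX'def
      have hmeas : (X' ∩ A).card < n := by
        have h1 : X' ∩ A ⊆ (X ∩ A).erase u := by
          intro x hx
          simp only [Finset.mem_inter, hX'def, Finset.mem_erase] at hx ⊢
          exact ⟨hx.1.2.1, hx.1.2.2, hx.2⟩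
        calc (X' ∩ A).card ≤ ((X ∩ A).erase u).card := Finset.card_le_card h1
          _ < (X ∩ A).card := Finset.card_erase_lt_of_mem hu
          _ = n := hn
      have hcard : (symmDiff A X).card ≤ (symmDiff A X').card := by
        have h1 := card_symm_erase_mem huX huA
        rcases eq_or_ne v u with rfl | hvu
        · have : X' = X.erase v := by simp [hX'def]
          rw [this]; omega
        · have hvX1 : v ∈ X.erase u := Finset.mem_erase.2 ⟨hvu, hvX⟩
          by_cases hvA : v ∈ A
          · have h2 := card_symm_erase_mem hvX1 hvA
            rw [← hX'def] at h2; omega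
          · have h2 := card_symm_erase_not_mem hvX1 hvA
            rw [← hX'def] at h2; omega
      obtain ⟨Y, hY, hYA, hle⟩ := ih _ hmeas X' hX' rfl
      exact ⟨Y, hY, hYA, hcard.trans hle⟩

lemma symm_of_subset {A Y : Finset α} (h : Y ⊆ A) : symmDiff A Y = A \ Y := by
  ext x; simp only [Finset.mem_symmDiff, Finset.mem_sdiff]
  constructor
  · rintro (hx | ⟨h1, h2⟩); · exact hx
    · exact absurd (h h1) h2
  · exact fun hx => Or.inl hx

lemma card_symm_of_subset {A Y : Finset α} (h : Y ⊆ A) :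
    (symmDiff A Y).card = A.card - Y.card := by
  rw [symm_of_subset h, Finset.card_sdiff_of_subset h]

lemma symm_of_disjoint {A Y : Finset α} (h : Y ∩ A = ∅) : symmDiff A Y = A ∪ Y := by
  have hd : ∀ x, x ∈ Y → x ∉ A := by
    intro x hx hxA
    exact absurd (Finset.mem_inter.2 ⟨hx, hxA⟩) (by simp [h])
  ext x; simp only [Finset.mem_symmDiff, Finset.mem_union]
  constructor
  · rintro (⟨h1, _⟩ | ⟨h1, _⟩); exacts [Or.inl h1, Or.inr h1]
  · rintro (hx | hx)
    · by_cases hxY : x ∈ Y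
      · exact absurd hx (hd x hxY)
      · exact Or.inl ⟨hx, hxY⟩
    · exact Or.inr ⟨hx, hd x hx⟩

lemma card_symm_of_disjoint {A Y : Finset α} (h : Y ∩ A = ∅) :
    (symmDiff A Y).card = A.card + Y.card := by
  rw [symm_of_disjoint h, Finset.card_union_of_disjoint]
  rw [Finset.disjoint_left]
  intro x hxA hxY
  exact absurd (Finset.mem_inter.2 ⟨hxY, hxA⟩) (by simp [h])

end Aux

/-- For a normal delta-matroid, the width of a twist splits as a sum of widths of
the restrictions to A and its complement. -/
theorem width_twist_eq_restrict [DecidableEq α] (E : Finset α) (F : Finset (Finset α))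
    (hD : IsDeltaMatroid E F) (hnormal : ∅ ∈ F) (A : Finset α) (hA : A ⊆ E) :
    widthF (twistF A F) = widthF (restr A F) + widthF (restr (E \ A) F) := by
  obtain ⟨hFne, hE, -⟩ := id hD
  have hmemA : ∀ Y ∈ F, Y ⊆ A → Y ∈ restr A F := by
    intro Y hY hYA; unfold restr; exact Finset.mem_filter.2 ⟨hY, hYA⟩
  have hmemB : ∀ Y ∈ F, Y ⊆ E \ A → Y ∈ restr (E \ A) F := by
    intro Y hY hYA; unfold restr; exact Finset.mem_filter.2 ⟨hY, hYA⟩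
  have hmemA' : ∀ Y ∈ restr A F, Y ∈ F ∧ Y ⊆ A := by
    intro Y hY; unfold restr at hY; exact Finset.mem_filter.1 hY
  have hmemB' : ∀ Y ∈ restr (E \ A) F, Y ∈ F ∧ Y ⊆ E \ A := by
    intro Y hY; unfold restr at hY; exact Finset.mem_filter.1 hY
  have hmemT : ∀ X ∈ F, symmDiff A X ∈ twistF A F := by
    intro X hX; unfold twistF
    apply Finset.mem_image.2
    exact ⟨X, hX, rfl⟩
  have hmemT' : ∀ Z ∈ twistF A F, ∃ X ∈ F, symmDiff A X = Z := by
    intro Z hZ; unfold twistF at hZ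
    exact Finset.mem_image.1 hZ
  have h1 : (twistF A F).Nonempty := by
    obtain ⟨X, hX⟩ := hFne; exact ⟨_, hmemT X hX⟩
  have h2 : (restr A F).Nonempty := ⟨∅, hmemA ∅ hnormal (Finset.empty_subset _)⟩
  have h3 : (restr (E \ A) F).Nonempty := ⟨∅, hmemB ∅ hnormal (Finset.empty_subset _)⟩
  have h1i := h1.image Finset.card
  have h2i := h2.image Finset.card
  have h3i := h3.image Finset.card
  set MA := ((restr A F).image Finset.card).max' h2i with hMA
  set MB := ((restr (E \ A) F).image Finset.card).max' h3i with hMB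
  have getDmax : ∀ (s : Finset ℕ) (h : s.Nonempty), s.max.getD 0 = s.max' h := by
    intro s h; rw [← Finset.coe_max' h]; rfl
  have getDmin : ∀ (s : Finset ℕ) (h : s.Nonempty), s.min.getD 0 = s.min' h := by
    intro s h; rw [← Finset.coe_min' h]; rfl
  have hmin2 : ((restr A F).image Finset.card).min' h2i = 0 := by
    have hm : (0:ℕ) ∈ (restr A F).image Finset.card := by
      apply Finset.mem_image.2
      exact ⟨∅, hmemA ∅ hnormal (Finset.empty_subset _), rfl⟩
    exact le_antisymm (Finset.min'_le _ 0 hm) (Nat.zero_le _)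
  have hmin3 : ((restr (E \ A) F).image Finset.card).min' h3i = 0 := by
    have hm : (0:ℕ) ∈ (restr (E \ A) F).image Finset.card := by
      apply Finset.mem_image.2
      exact ⟨∅, hmemB ∅ hnormal (Finset.empty_subset _), rfl⟩
    exact le_antisymm (Finset.min'_le _ 0 hm) (Nat.zero_le _)
  have hMAle : MA ≤ A.card := by
    obtain ⟨Y, hY, hYc⟩ := Finset.mem_image.1 (Finset.max'_mem _ h2i)
    rw [hMA, ← hYc]
    exact Finset.card_le_card (hmemA' Y hY).2
  have hmax1 : ((twistF A F).image Finset.card).max' h1i = A.card + MB := by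
    apply le_antisymm
    · apply Finset.max'_le
      intro c hc
      obtain ⟨Z, hZ, rfl⟩ := Finset.mem_image.1 hc
      obtain ⟨X, hX, rfl⟩ := hmemT' Z hZ
      obtain ⟨Y, hY, hYd, hle⟩ := max_reach hD hnormal A X hX
      have hYE : Y ⊆ E \ A := by
        intro x hx
        simp only [Finset.mem_sdiff]
        refine ⟨hE Y hY hx, fun hxA => ?_⟩
        exact absurd (Finset.mem_inter.2 ⟨hx, hxA⟩) (by simp [hYd])
      have hYM : Y.card ≤ MB := by
        apply Finset.le_max'
        apply Finset.mem_image.2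
        exact ⟨Y, hmemB Y hY hYE, rfl⟩
      calc (symmDiff A X).card ≤ (symmDiff A Y).card := hle
        _ = A.card + Y.card := card_symm_of_disjoint hYd
        _ ≤ A.card + MB := by omega
    · obtain ⟨Y, hY, hYc⟩ := Finset.mem_image.1 (Finset.max'_mem _ h3i)
      obtain ⟨hYF, hYs⟩ := hmemB' Y hY
      have hYd : Y ∩ A = ∅ := by
        rw [Finset.eq_empty_iff_forall_notMem]
        intro x hx
        obtain ⟨hx1, hx2⟩ := Finset.mem_inter.1 hx
        exact (Finset.mem_sdiff.1 (hYs hx1)).2 hx2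
      apply Finset.le_max'
      apply Finset.mem_image.2
      refine ⟨symmDiff A Y, hmemT Y hYF, ?_⟩
      rw [card_symm_of_disjoint hYd, hYc]
  have hmin1 : ((twistF A F).image Finset.card).min' h1i = A.card - MA := by
    apply le_antisymm
    · obtain ⟨Y, hY, hYc⟩ := Finset.mem_image.1 (Finset.max'_mem _ h2i)
      obtain ⟨hYF, hYs⟩ := hmemA' Y hY
      apply Finset.min'_le
      apply Finset.mem_image.2
      refine ⟨symmDiff A Y, hmemT Y hYF, ?_⟩
      rw [card_symm_of_subset hYs, hYc]
    · apply Finset.le_min'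
      intro c hc
      obtain ⟨Z, hZ, rfl⟩ := Finset.mem_image.1 hc
      obtain ⟨X, hX, rfl⟩ := hmemT' Z hZ
      obtain ⟨Y, hY, hYs, hle⟩ := min_reach hD hnormal A X hX
      have hYM : Y.card ≤ MA := by
        apply Finset.le_max'
        apply Finset.mem_image.2
        exact ⟨Y, hmemA Y hY hYs, rfl⟩
      have h4 := card_symm_of_subset hYs
      omega
  unfold widthF
  rw [getDmax _ h1i, getDmin _ h1i, getDmax _ h2i, getDmin _ h2i,
    getDmax _ h3i, getDmin _ h3i, hmax1, hmin1, hmin2, hmin3]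
  omega
end

section
/- For a normal delta-matroid D = (E, F) and any A ⊆ E, ρ_D(A) + ρ_D(E \ A) − |E| = w(D*A), where ρ_D(A) = |E| − min{|A Δ F| : F ∈ F}. -/
open Finset

variable {α : Type*}

/-- Bouchet's rank function ρ_D(A) = |E| − min{|A Δ F| : F ∈ 𝓕}. -/
def rho [DecidableEq α] (E A : Finset α) (F : Finset (Finset α)) : ℕ :=
  E.card - ((F.image (fun X => (symmDiff A X).card)).min.getD 0)

/-- For a normal delta-matroid, ρ(A) + ρ(E \ A) − |E| = w(D∗A). -/
theorem rho_add_rho_compl [DecidableEq α] (E : Finset α) (F : Finset (Finset α))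
    (hD : IsDeltaMatroid E F) (hnormal : ∅ ∈ F) (A : Finset α) (hA : A ⊆ E) :
    (rho E A F : ℤ) + (rho E (E \ A) F : ℤ) - (E.card : ℤ)
      = (widthF (twistF A F) : ℤ) := by
  classical
  obtain ⟨hne, hsub, -⟩ := hD
  set S := F.image (fun X => (symmDiff A X).card) with hS
  have hSne : S.Nonempty := hne.image _
  set m := S.min' hSne with hm
  set M := S.max' hSne with hM
  have hmM : m ≤ M := Finset.min'_le _ _ (Finset.max'_mem _ _)
  -- every feasible set's symmDiff with A is inside E
  have hsubE : ∀ X ∈ F, symmDiff A X ⊆ E := by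
    intro X hX e he
    rw [Finset.mem_symmDiff] at he
    rcases he with ⟨h1, _⟩ | ⟨h1, _⟩
    · exact hA h1
    · exact hsub X hX h1
  have hScard : ∀ n ∈ S, n ≤ E.card := by
    intro n hn
    rw [hS, Finset.mem_image] at hn
    obtain ⟨X, hX, rfl⟩ := hn
    exact Finset.card_le_card (hsubE X hX)
  have hME : M ≤ E.card := hScard M (Finset.max'_mem _ _)
  -- key set identity
  have key : ∀ X ∈ F, symmDiff (E \ A) X = E \ symmDiff A X := by
    intro X hX
    ext e
    have hXE : e ∈ X → e ∈ E := fun h => hsub X hX h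
    have hAE : e ∈ A → e ∈ E := fun h => hA h
    simp only [Finset.mem_symmDiff, Finset.mem_sdiff]
    tauto
  have keycard : ∀ X ∈ F, (symmDiff (E \ A) X).card = E.card - (symmDiff A X).card := by
    intro X hX
    rw [key X hX, Finset.card_sdiff_of_subset (hsubE X hX)]
  -- the image for E \ A
  set T := F.image (fun X => (symmDiff (E \ A) X).card) with hT
  have hTeq : T = S.image (fun n => E.card - n) := by
    rw [hT, hS, Finset.image_image]
    exact Finset.image_congr (fun X hX => keycard X hX)
  have hTne : T.Nonempty := hne.image _
  have hTmin : T.min' hTne = E.card - M := by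
    apply le_antisymm
    · apply Finset.min'_le
      rw [hTeq, Finset.mem_image]
      exact ⟨M, Finset.max'_mem _ _, rfl⟩
    · apply Finset.le_min'
      intro t ht
      rw [hTeq, Finset.mem_image] at ht
      obtain ⟨n, hn, rfl⟩ := ht
      exact Nat.sub_le_sub_left (Finset.le_max' _ _ hn) _
  -- getD/min'/max' conversions
  have hminS : S.min.getD 0 = m := by
    rw [hm, ← Finset.coe_min' hSne]; rfl
  have hmaxS : S.max.getD 0 = M := by
    rw [hM, ← Finset.coe_max' hSne]; rfl
  have hminT : T.min.getD 0 = E.card - M := by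
    rw [← hTmin, ← Finset.coe_min' hTne]; rfl
  -- rho values
  have hrhoA : rho E A F = E.card - m := by rw [rho, ← hS, hminS]
  have hrhoAc : rho E (E \ A) F = M := by
    rw [rho, ← hT, hminT, Nat.sub_sub_self hME]
  -- width
  have himg : (twistF A F).image Finset.card = S := by
    rw [twistF, Finset.image_image, hS]; rfl
  have hwidth : widthF (twistF A F) = M - m := by
    rw [widthF, himg, hminS, hmaxS]
  have hm_le : m ≤ E.card := le_trans hmM hME
  rw [hrhoA, hrhoAc, hwidth]
  omega
end

section
/- For a normal binary delta-matroid D whose intersection graph G_D is the complete graph K_v on v vertices: if v is odd then ∂w_D(z) = 2^v z^{v−1}, and if v is even then ∂w_D(z) = 2^{v−1} z^v + 2^{v−1} z^{v−2}. -/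
open Finset

variable {α : Type*}

open scoped Classical in
/-- The feasible sets of the normal binary delta-matroid D(C): subsets A whose
principal submatrix C[A] is non-singular (C[∅] is non-singular by convention). -/
noncomputable def feas {α : Type*} [Fintype α] [DecidableEq α]
    (C : Matrix α α (ZMod 2)) : Finset (Finset α) :=
  Finset.univ.powerset.filter
    (fun A => (C.submatrix (fun i : {x // x ∈ A} => (i : α))
        (fun i : {x // x ∈ A} => (i : α))).det ≠ 0)

/-- The intersection graph of D(C) (loops discarded): u ~ v iff u ≠ v and C u v = 1. -/
def iGraph {α : Type*} (C : Matrix α α (ZMod 2)) : SimpleGraph α :=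
  SimpleGraph.fromRel (fun u v => C u v = 1)

/-
Over GF(2) every principal submatrix `C[A]` is `1 + J`, with determinant `1 + |A|` by the matrix
determinant lemma, so `D(C)` is the delta-matroid of the even subsets of `E`. Its twist by `A`
consists of the sets of the parity of `|A|`, whose sizes range over all `k ≤ v` of that parity, so
`w(D*A)` is `v - 1` when `v` is odd, and `v` or `v - 2` according to the parity of `|A|` when `v`
is even. Half of the subsets of a nonempty set are even.
-/

lemma Matrix.det_eq_one_add_card_of_offDiag_eq_one {β : Type*} [Fintype β] [DecidableEq β]
    (M : Matrix β β (ZMod 2)) (hM : ∀ i j, M i j = if i = j then 0 else 1) :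
    M.det = 1 + Fintype.card β := by
  have hM' : M = 1 + Matrix.replicateCol Unit (1 : β → ZMod 2)
      * Matrix.replicateRow Unit (1 : β → ZMod 2) := by
    ext i j
    by_cases h : i = j
    · simp [hM, h, Matrix.mul_apply]
      decide
    · simp [hM, h, Matrix.mul_apply]
  rw [hM', Matrix.det_one_add_replicateCol_mul_replicateRow]
  simp [dotProduct]

lemma feas_eq_filter_even_card {α : Type*} [Fintype α] [DecidableEq α]
    (C : Matrix α α (ZMod 2)) (hC : ∀ u v, C u v = if u = v then 0 else 1) :
    feas C = univ.filter fun X => Even X.card := by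
  ext X
  rw [feas, powerset_univ, mem_filter, mem_filter, Matrix.det_eq_one_add_card_of_offDiag_eq_one]
  · rw [Fintype.card_coe, ← ZMod.natCast_mod, Nat.even_iff]
    rcases Nat.mod_two_eq_zero_or_one X.card with h | h <;> simp only [h, mem_univ] <;> decide
  · intro i j
    simp only [Matrix.submatrix_apply, hC, Subtype.ext_iff]

lemma Finset.card_symmDiff_add_two_mul_card_inter [DecidableEq α] (s t : Finset α) :
    (symmDiff s t).card + 2 * (s ∩ t).card = s.card + t.card := by
  have hsub : s ∩ t ⊆ s ∪ t := inter_subset_left.trans subset_union_left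
  rw [symmDiff_eq_sup_sdiff_inf, sup_eq_union, inf_eq_inter, card_sdiff_of_subset hsub,
    ← card_union_add_card_inter s t]
  have := card_le_card hsub
  omega

lemma mem_twistF [DecidableEq α] {A Y : Finset α} {F : Finset (Finset α)} :
    Y ∈ twistF A F ↔ symmDiff A Y ∈ F := by
  refine ⟨?_, fun h => mem_image.2 ⟨_, h, symmDiff_symmDiff_cancel_left A Y⟩⟩
  intro h
  obtain ⟨X, hX, rfl⟩ := mem_image.1 h
  rwa [symmDiff_symmDiff_cancel_left]

lemma twistF_filter_even_card [Fintype α] [DecidableEq α] (A : Finset α) :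
    twistF A (univ.filter fun X => Even X.card) = univ.filter fun Y => Y.card % 2 = A.card % 2 := by
  ext Y
  have := card_symmDiff_add_two_mul_card_inter A Y
  simp only [mem_twistF, mem_filter, mem_univ, true_and, Nat.even_iff]
  omega

lemma widthF_eq_sub {F : Finset (Finset α)} {a b : ℕ}
    (ha : IsLeast (F.image card : Set ℕ) a) (hb : IsGreatest (F.image card : Set ℕ) b) :
    widthF F = b - a := by
  have hne : (F.image card).Nonempty := ⟨a, ha.1⟩
  rw [widthF, ← coe_max' hne, ← coe_min' hne, (isGreatest_max' _ hne).unique hb,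
    (isLeast_min' _ hne).unique ha]
  rfl

lemma coe_image_card_filter_card_mod_two [Fintype α] (r : ℕ) :
    (((univ : Finset (Finset α)).filter fun Y => Y.card % 2 = r).image card : Set ℕ)
      = {k | k ≤ Fintype.card α ∧ k % 2 = r} := by
  ext k
  simp only [coe_image, coe_filter, mem_univ, true_and, Set.mem_image, Set.mem_ofPred_eq]
  constructor
  · rintro ⟨Y, hY, rfl⟩
    exact ⟨card_le_univ Y, hY⟩
  · rintro ⟨hk, rfl⟩
    obtain ⟨Y, -, hY⟩ := exists_subset_card_eq (s := (univ : Finset α)) (n := k)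
      (by rwa [card_univ])
    exact ⟨Y, by rw [hY], hY⟩

lemma widthF_filter_card_mod_two [Fintype α] [Nonempty α] {r : ℕ} (hr : r < 2) :
    widthF ((univ : Finset (Finset α)).filter fun Y => Y.card % 2 = r)
      = Fintype.card α - (Fintype.card α + r) % 2 - r := by
  have hn : 0 < Fintype.card α := Fintype.card_pos
  apply widthF_eq_sub <;> rw [coe_image_card_filter_card_mod_two]
  · exact ⟨⟨by omega, by omega⟩, fun k ⟨hk, hkr⟩ => by omega⟩
  · exact ⟨⟨by omega, by omega⟩, fun k ⟨hk, hkr⟩ => by omega⟩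

lemma widthF_twistF_filter_even_card [Fintype α] [DecidableEq α] [Nonempty α] (A : Finset α) :
    widthF (twistF A (univ.filter fun X => Even X.card)) =
      if Even (Fintype.card α) then
        (if Even A.card then Fintype.card α else Fintype.card α - 2)
      else Fintype.card α - 1 := by
  have hn : 0 < Fintype.card α := Fintype.card_pos
  rw [twistF_filter_even_card, widthF_filter_card_mod_two (Nat.mod_lt _ two_pos)]
  split_ifs <;> simp only [Nat.even_iff] at * <;> omega

lemma card_filter_even_card_eq_card_filter_not [Fintype α] [Nonempty α] :
    (univ.filter fun A : Finset α => Even A.card).card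
      = (univ.filter fun A : Finset α => ¬ Even A.card).card := by
  have h := sum_powerset_neg_one_pow_card_of_nonempty (univ_nonempty (α := α))
  rw [powerset_univ, ← sum_filter_add_sum_filter_not _ fun A : Finset α => Even A.card,
    sum_congr rfl fun A hA => (mem_filter.1 hA).2.neg_one_pow,
    sum_congr rfl fun A hA => (Nat.not_even_iff_odd.1 (mem_filter.1 hA).2).neg_one_pow] at h
  simp only [sum_const, nsmul_eq_mul, mul_one, mul_neg] at h
  exact_mod_cast add_neg_eq_zero.1 h

lemma card_filter_even_card [Fintype α] [Nonempty α] :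
    (univ.filter fun A : Finset α => Even A.card).card = 2 ^ (Fintype.card α - 1) := by
  have h := card_filter_add_card_filter_not (s := (univ : Finset (Finset α)))
    fun A => Even A.card
  rw [← card_filter_even_card_eq_card_filter_not, card_univ, Fintype.card_finset,
    ← Nat.sub_one_add_one Fintype.card_pos.ne', pow_succ] at h
  omega

lemma card_filter_not_even_card [Fintype α] [Nonempty α] :
    (univ.filter fun A : Finset α => ¬ Even A.card).card = 2 ^ (Fintype.card α - 1) := by
  rw [← card_filter_even_card_eq_card_filter_not, card_filter_even_card]

/-- The twist polynomial of a normal binary delta-matroid whose intersection graph is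
the complete graph on v vertices. -/
theorem twistPoly_complete {α : Type*} [Fintype α] [DecidableEq α] [Nonempty α]
    (C : Matrix α α (ZMod 2))
    (hC : ∀ u v, C u v = if u = v then 0 else 1) :
    (Odd (Fintype.card α) →
      twistPoly (Finset.univ : Finset α) (feas C)
        = (2 : Polynomial ℤ) ^ Fintype.card α * Polynomial.X ^ (Fintype.card α - 1)) ∧
    (Even (Fintype.card α) →
      twistPoly (Finset.univ : Finset α) (feas C)
        = (2 : Polynomial ℤ) ^ (Fintype.card α - 1) * Polynomial.X ^ Fintype.card α
          + (2 : Polynomial ℤ) ^ (Fintype.card α - 1)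
            * Polynomial.X ^ (Fintype.card α - 2)) := by
  simp only [twistPoly, powerset_univ, feas_eq_filter_even_card C hC,
    widthF_twistF_filter_even_card]
  constructor
  · intro hodd
    simp only [if_neg (Nat.not_even_iff_odd.2 hodd)]
    rw [sum_const, card_univ, Fintype.card_finset, nsmul_eq_mul]
    push_cast
    ring
  · intro heven
    simp only [if_pos heven, pow_ite]
    rw [sum_ite, sum_const, sum_const, card_filter_even_card, card_filter_not_even_card,
      nsmul_eq_mul, nsmul_eq_mul]
    push_cast
    ring
end

section
/- Let D = (E, F) be a normal binary delta-matroid. The twist polynomial ∂w_D(z) has a non-zero constant term (i.e., there exists A ⊆ E with w(D*A) = 0) if and only if the intersection graph G_D is bipartite. -/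
open Finset

variable {α : Type*}

section Aux


variable {α : Type*}

lemma my_mem_feas_iff {α : Type*} [Fintype α] [DecidableEq α] (C : Matrix α α (ZMod 2))
    (Y : Finset α) :
    Y ∈ feas C ↔ (C.submatrix (fun i : {x // x ∈ Y} => (i : α))
        (fun i : {x // x ∈ Y} => (i : α))).det ≠ 0 := by
  classical
  simp [feas, Finset.mem_filter]

lemma my_empty_mem_feas {α : Type*} [Fintype α] [DecidableEq α] (C : Matrix α α (ZMod 2)) :
    (∅ : Finset α) ∈ feas C := by
  rw [my_mem_feas_iff]
  haveI : IsEmpty {x // x ∈ (∅ : Finset α)} := ⟨fun x => Finset.notMem_empty _ x.2⟩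
  simp

lemma my_widthF_eq_zero_iff {F : Finset (Finset α)} (hF : F.Nonempty) :
    widthF F = 0 ↔ ∀ X ∈ F, ∀ Y ∈ F, X.card = Y.card := by
  have hs : (F.image Finset.card).Nonempty := hF.image _
  obtain ⟨M, hM⟩ := Finset.max_of_nonempty hs
  obtain ⟨m, hm⟩ := Finset.min_of_nonempty hs
  have hw : widthF F = M - m := by rw [widthF, hM, hm]; rfl
  constructor
  · intro h X hX Y hY
    have hMm : M ≤ m := by omega
    have h1 : m ≤ X.card ∧ X.card ≤ M := by
      have h1 := Finset.min_le (Finset.mem_image_of_mem Finset.card hX)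
      have h2 := Finset.le_max (Finset.mem_image_of_mem Finset.card hX)
      rw [hm] at h1; rw [hM] at h2
      exact ⟨by exact_mod_cast h1, by exact_mod_cast h2⟩
    have h2 : m ≤ Y.card ∧ Y.card ≤ M := by
      have h1 := Finset.min_le (Finset.mem_image_of_mem Finset.card hY)
      have h2 := Finset.le_max (Finset.mem_image_of_mem Finset.card hY)
      rw [hm] at h1; rw [hM] at h2
      exact ⟨by exact_mod_cast h1, by exact_mod_cast h2⟩
    omega
  · intro h
    have hMs := Finset.mem_of_max hM
    have hms := Finset.mem_of_min hm
    obtain ⟨X, hX, hXc⟩ := Finset.mem_image.mp hMs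
    obtain ⟨Y, hY, hYc⟩ := Finset.mem_image.mp hms
    have := h X hX Y hY
    omega

lemma my_card_symmDiff [DecidableEq α] (A Y : Finset α) :
    (symmDiff A Y).card = (A \ Y).card + (Y \ A).card := by
  rw [symmDiff_def, sup_eq_union, card_union_of_disjoint disjoint_sdiff_sdiff]

lemma my_det_eq_zero_of_unbalanced {α : Type*} [DecidableEq α] (C : Matrix α α (ZMod 2))
    (Y A : Finset α)
    (h0 : ∀ i ∈ Y, ∀ j ∈ Y, ((i ∈ A) ↔ (j ∈ A)) → C i j = 0)
    (hne : (Y ∩ A).card ≠ (Y \ A).card) :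
    (C.submatrix (fun i : {x // x ∈ Y} => (i : α)) (fun i : {x // x ∈ Y} => (i : α))).det = 0 := by
  rw [Matrix.det_apply]
  refine Finset.sum_eq_zero fun σ _ => ?_
  suffices h : (∏ i, (C.submatrix (fun i : {x // x ∈ Y} => (i : α))
      (fun i : {x // x ∈ Y} => (i : α))) (σ i) i) = 0 by rw [h, smul_zero]
  by_contra hprod
  have hne0 : ∀ i : {x // x ∈ Y}, C ((σ i : {x // x ∈ Y}) : α) (i : α) ≠ 0 := by
    intro i hi
    exact hprod (Finset.prod_eq_zero (Finset.mem_univ i) hi)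
  have hside : ∀ i : {x // x ∈ Y}, (((σ i : {x // x ∈ Y}) : α) ∈ A) ↔ ¬ ((i : α) ∈ A) := by
    intro i
    have h1 := h0 _ (σ i).2 _ i.2
    have h2 := hne0 i
    tauto
  apply hne
  refine Finset.card_bij'
    (fun x hx => ((σ ⟨x, (Finset.mem_inter.mp hx).1⟩ : {x // x ∈ Y}) : α))
    (fun x hx => ((σ.symm ⟨x, (Finset.mem_sdiff.mp hx).1⟩ : {x // x ∈ Y}) : α))
    ?_ ?_ ?_ ?_
  · intro x hx
    obtain ⟨hxY, hxA⟩ := Finset.mem_inter.mp hx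
    refine Finset.mem_sdiff.mpr ⟨(σ ⟨x, hxY⟩).2, ?_⟩
    have := hside ⟨x, hxY⟩
    tauto
  · intro x hx
    obtain ⟨hxY, hxA⟩ := Finset.mem_sdiff.mp hx
    refine Finset.mem_inter.mpr ⟨(σ.symm ⟨x, hxY⟩).2, ?_⟩
    have h1 := hside (σ.symm ⟨x, hxY⟩)
    rw [Equiv.apply_symm_apply] at h1
    tauto
  · intro x hx
    simp only [Subtype.coe_eta, Equiv.symm_apply_apply]
  · intro x hx
    simp only [Subtype.coe_eta, Equiv.apply_symm_apply]

lemma my_det_singleton {α : Type*} [DecidableEq α] (C : Matrix α α (ZMod 2)) (u : α) :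
    (C.submatrix (fun i : {x // x ∈ ({u} : Finset α)} => (i : α))
      (fun i : {x // x ∈ ({u} : Finset α)} => (i : α))).det = C u u := by
  have hu : u ∈ ({u} : Finset α) := Finset.mem_singleton_self u
  let e : Fin 1 ≃ {x // x ∈ ({u} : Finset α)} :=
  { toFun := fun _ => ⟨u, hu⟩
    invFun := fun _ => 0
    left_inv := fun i => by fin_cases i; rfl
    right_inv := fun x => by
      ext; exact (Finset.mem_singleton.mp x.2).symm }
  rw [← Matrix.det_submatrix_equiv_self e, Matrix.det_fin_one]
  rfl

lemma my_det_pair {α : Type*} [DecidableEq α] (C : Matrix α α (ZMod 2)) {u v : α} (huv : u ≠ v) :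
    (C.submatrix (fun i : {x // x ∈ ({u, v} : Finset α)} => (i : α))
      (fun i : {x // x ∈ ({u, v} : Finset α)} => (i : α))).det
      = C u u * C v v - C u v * C v u := by
  have hu : u ∈ ({u, v} : Finset α) := by simp
  have hv : v ∈ ({u, v} : Finset α) := by simp
  let e : Fin 2 ≃ {x // x ∈ ({u, v} : Finset α)} :=
  { toFun := ![⟨u, hu⟩, ⟨v, hv⟩]
    invFun := fun x => if (x : α) = u then 0 else 1
    left_inv := by
      intro i; fin_cases i <;> simp [huv, Ne.symm huv]
    right_inv := by
      rintro ⟨x, hx⟩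
      rcases Finset.mem_insert.mp hx with rfl | hx
      · simp
      · have hxv : x = v := Finset.mem_singleton.mp hx
        subst hxv
        simp [Ne.symm huv] }
  rw [← Matrix.det_submatrix_equiv_self e, Matrix.det_fin_two]
  simp [e, Matrix.submatrix_apply]

end Aux

/-- The twist polynomial of a normal binary delta-matroid has a non-zero constant term
iff its intersection graph (including loops) is bipartite. -/
theorem constant_term_iff_bipartite {α : Type*} [Fintype α] [DecidableEq α]
    (C : Matrix α α (ZMod 2)) (hC : C.IsSymm) :
    (∃ A ∈ (Finset.univ : Finset α).powerset, widthF (twistF A (feas C)) = 0) ↔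
      ∃ X : Set α, ∀ u v, C u v = 1 → (u ∈ X ↔ v ∉ X) := by
  classical
  have hF : (feas C).Nonempty := ⟨∅, my_empty_mem_feas C⟩
  have hsde : ∀ A : Finset α, symmDiff A (∅ : Finset α) = A := by
    intro A; simp [symmDiff_def]
  constructor
  · rintro ⟨A, -, hw⟩
    have hall := (my_widthF_eq_zero_iff (hF.image _)).mp hw
    have hcardA : ∀ Y ∈ feas C, (symmDiff A Y).card = A.card := by
      intro Y hY
      have h1 := hall _ (Finset.mem_image_of_mem _ hY) _
        (Finset.mem_image_of_mem (fun X => symmDiff A X) (my_empty_mem_feas C))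
      simpa [hsde A] using h1
    have hbal : ∀ Y ∈ feas C, (Y \ A).card = (A ∩ Y).card := by
      intro Y hY
      have h1 := hcardA Y hY
      rw [my_card_symmDiff] at h1
      have h2 := Finset.card_sdiff_add_card_inter A Y
      omega
    have hdiag : ∀ u, C u u = 0 := by
      intro u
      by_contra hu
      have hmem : ({u} : Finset α) ∈ feas C := by
        rw [my_mem_feas_iff, my_det_singleton]; exact hu
      have h1 := hbal _ hmem
      by_cases huA : u ∈ A
      · rw [Finset.sdiff_eq_empty_iff_subset.mpr (by simpa using huA),
          Finset.inter_singleton_of_mem huA] at h1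
        simp at h1
      · rw [Finset.inter_singleton_of_notMem huA] at h1
        have h2 : ({u} : Finset α) \ A = {u} := by
          rw [Finset.sdiff_eq_self_iff_disjoint]
          simpa using huA
        rw [h2] at h1
        simp at h1
    refine ⟨(A : Set α), fun u v huv => ?_⟩
    by_cases huveq : u = v
    · subst huveq; rw [hdiag u] at huv; exact absurd huv (by decide)
    · have hvu : C v u = 1 := by
        have h := congrFun (congrFun hC u) v
        rw [Matrix.transpose_apply] at h
        rw [h]; exact huv
      have hmem : ({u, v} : Finset α) ∈ feas C := by
        rw [my_mem_feas_iff, my_det_pair C huveq, hdiag, hdiag, huv, hvu]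
        decide
      have h1 := hbal _ hmem
      rw [Finset.sdiff_eq_filter, Finset.inter_comm, ← Finset.filter_mem_eq_inter] at h1
      simp only [Finset.mem_coe]
      by_cases huA : u ∈ A <;> by_cases hvA : v ∈ A <;>
        simp [Finset.filter_insert, Finset.filter_singleton, huA, hvA, huveq] at h1 ⊢ <;>
        tauto
  · rintro ⟨X, hX⟩
    haveI := Classical.decPred (· ∈ X)
    set A : Finset α := Finset.univ.filter (fun x => x ∈ X) with hA
    refine ⟨A, Finset.mem_powerset.mpr (Finset.subset_univ _), ?_⟩
    refine (my_widthF_eq_zero_iff (hF.image _)).mpr ?_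
    have key : ∀ Y ∈ feas C, (symmDiff A Y).card = A.card := by
      intro Y hY
      have hdet := (my_mem_feas_iff C Y).mp hY
      have h0 : ∀ i ∈ Y, ∀ j ∈ Y, ((i ∈ A) ↔ (j ∈ A)) → C i j = 0 := by
        intro i _ j _ hij
        by_contra hCij
        have h1 : C i j = 1 := by
          have hz : ∀ x : ZMod 2, x = 0 ∨ x = 1 := by decide
          rcases hz (C i j) with h | h
          · exact absurd h hCij
          · exact h
        have h2 := hX i j h1
        simp only [hA, Finset.mem_filter, Finset.mem_univ, true_and] at hij
        tauto
      have hbal : (Y ∩ A).card = (Y \ A).card := by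
        by_contra hne
        exact hdet (my_det_eq_zero_of_unbalanced C Y A h0 hne)
      rw [my_card_symmDiff]
      have h2 := Finset.card_sdiff_add_card_inter A Y
      have h3 : (Y ∩ A).card = (A ∩ Y).card := by rw [Finset.inter_comm]
      omega
    intro S hS T hT
    obtain ⟨Y1, hY1, rfl⟩ := Finset.mem_image.mp hS
    obtain ⟨Y2, hY2, rfl⟩ := Finset.mem_image.mp hT
    rw [key _ hY1, key _ hY2]
end

section
/- Let D = (E, F) be a connected even normal binary delta-matroid. Then the twist polynomial ∂w_D(z) is a monomial m z^k (i.e., w(D*A) is the same for all A ⊆ E) if and only if the intersection graph G_D is a complete graph of odd order. -/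
open Finset

variable {α : Type*}

set_option linter.unusedSectionVars false
set_option maxHeartbeats 1600000

namespace TwAux
open Matrix

variable {α : Type*} [Fintype α] [DecidableEq α]

/-- zero-padded principal submatrix -/
def pad (C : Matrix α α (ZMod 2)) (S : Finset α) : Matrix α α (ZMod 2) :=
  Matrix.of fun i j => if i ∈ S ∧ j ∈ S then C i j else 0

lemma pad_apply (C : Matrix α α (ZMod 2)) (S : Finset α) (i j : α) :
    pad C S i j = if i ∈ S ∧ j ∈ S then C i j else 0 := rfl

/-- vectors supported on T -/
def csub (T : Finset α) : Submodule (ZMod 2) (α → ZMod 2) where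
  carrier := {z | ∀ i ∉ T, z i = 0}
  add_mem' := by intro a b ha hb i hi; simp [ha i hi, hb i hi]
  zero_mem' := by intro i hi; rfl
  smul_mem' := by intro c a ha i hi; simp [ha i hi]

lemma mem_csub {T : Finset α} {z : α → ZMod 2} : z ∈ csub T ↔ ∀ i ∉ T, z i = 0 := Iff.rfl

lemma csub_mono {T T' : Finset α} (h : T ⊆ T') : csub T ≤ csub T' := by
  intro z hz i hi
  exact hz i (fun hmem => hi (h hmem))

/-- projection onto coordinates in S -/
def proj (S : Finset α) : (α → ZMod 2) →ₗ[ZMod 2] (α → ZMod 2) where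
  toFun z := fun i => if i ∈ S then z i else 0
  map_add' := by intro a b; funext i; by_cases h : i ∈ S <;> simp [h]
  map_smul' := by intro c a; funext i; by_cases h : i ∈ S <;> simp [h]

lemma proj_apply (S : Finset α) (z : α → ZMod 2) (i : α) :
    proj S z i = if i ∈ S then z i else 0 := rfl

def cspan (C : Matrix α α (ZMod 2)) (S T : Finset α) : Submodule (ZMod 2) (α → ZMod 2) :=
  (csub T).map (pad C S).mulVecLin

noncomputable def rk (C : Matrix α α (ZMod 2)) (S : Finset α) : ℕ :=
  Module.finrank (ZMod 2) (cspan C S S)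

lemma mem_cspan {C : Matrix α α (ZMod 2)} {S T : Finset α} {v : α → ZMod 2} :
    v ∈ cspan C S T ↔ ∃ z ∈ csub T, (pad C S).mulVec z = v := by
  simp [cspan, Submodule.mem_map, Matrix.mulVecLin_apply]

lemma cspan_mono (C : Matrix α α (ZMod 2)) (S : Finset α) {T T' : Finset α} (h : T ⊆ T') :
    cspan C S T ≤ cspan C S T' := Submodule.map_mono (csub_mono h)

lemma pad_univ (C : Matrix α α (ZMod 2)) : pad C univ = C := by
  ext i j; simp [pad_apply]

/-- key computation: for z supported in S ⊆ T, the padded product for S is the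
S-projection of the padded product for T. -/
lemma proj_pad_mulVec (C : Matrix α α (ZMod 2)) {S T : Finset α} (hST : S ⊆ T)
    {z : α → ZMod 2} (hz : z ∈ csub S) :
    (pad C S).mulVec z = proj S ((pad C T).mulVec z) := by
  funext i
  simp only [Matrix.mulVec, dotProduct, proj_apply, pad_apply]
  by_cases hi : i ∈ S
  · simp only [hi, if_true]
    apply Finset.sum_congr rfl
    intro j _
    by_cases hj : j ∈ S
    · simp [hj, hi, hST hi, hST hj]
    · simp [mem_csub.1 hz j hj]
  · simp only [hi, if_false]
    apply Finset.sum_eq_zero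
    intro j _
    simp [hi]

lemma cspan_eq_map_proj (C : Matrix α α (ZMod 2)) {U S T : Finset α} (hUS : U ⊆ S)
    (hST : S ⊆ T) : cspan C S U = (cspan C T U).map (proj S) := by
  ext v
  simp only [Submodule.mem_map, mem_cspan]
  constructor
  · rintro ⟨z, hz, rfl⟩
    exact ⟨(pad C T).mulVec z, ⟨z, hz, rfl⟩,
      (proj_pad_mulVec C hST (csub_mono hUS hz)).symm⟩
  · rintro ⟨w, ⟨z, hz, rfl⟩, rfl⟩
    exact ⟨z, hz, proj_pad_mulVec C hST (csub_mono hUS hz)⟩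

lemma rk_mono (C : Matrix α α (ZMod 2)) {S T : Finset α} (h : S ⊆ T) : rk C S ≤ rk C T := by
  have h1 : cspan C S S = (cspan C T S).map (proj S) := cspan_eq_map_proj C (le_refl S) h
  calc rk C S = Module.finrank (ZMod 2) ((cspan C T S).map (proj S)) := by rw [rk, h1]
    _ ≤ Module.finrank (ZMod 2) (cspan C T S) := Submodule.finrank_map_le _ _
    _ ≤ Module.finrank (ZMod 2) (cspan C T T) := Submodule.finrank_mono (cspan_mono C T h)



/-- decompose a supported vector into singles -/
lemma csub_decomp {T : Finset α} {z : α → ZMod 2} (hz : z ∈ csub T) :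
    z = ∑ i ∈ T, z i • Pi.single i (1 : ZMod 2) := by
  funext j
  rw [Finset.sum_apply]
  by_cases hj : j ∈ T
  · rw [Finset.sum_eq_single j]
    · simp
    · intro b _ hbj; simp [Pi.single_apply, hbj.symm]
    · intro h; exact absurd hj h
  · rw [mem_csub.1 hz j hj]
    apply (Finset.sum_eq_zero _).symm
    intro b hb
    have : b ≠ j := fun h => hj (h ▸ hb)
    simp [Pi.single_apply, this]

/-- csub T is finrank T.card : via linear equiv to functions on T -/
noncomputable def csubEquiv (T : Finset α) : csub T ≃ₗ[ZMod 2] ({x // x ∈ T} → ZMod 2) where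
  toFun z := fun i => z.1 i
  map_add' := by intro a b; rfl
  map_smul' := by intro c a; rfl
  invFun v := ⟨fun i => if h : i ∈ T then v ⟨i, h⟩ else 0, by
    intro i hi; simp [hi]⟩
  left_inv := by
    rintro ⟨z, hz⟩
    ext i
    by_cases hi : i ∈ T <;> simp [hi]
    exact (mem_csub.1 hz i hi).symm
  right_inv := by
    intro v; funext i; simp [i.2]

lemma finrank_csub (T : Finset α) : Module.finrank (ZMod 2) (csub T) = T.card := by
  rw [(csubEquiv T).finrank_eq]
  simp [Module.finrank_pi]

open Finset
variable {K : Type*} [Field K] {M : Type*} [AddCommGroup M] [Module K M] [FiniteDimensional K M]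

lemma finrank_map_eq_of (f : M →ₗ[K] M) (U : Submodule K M)
    (h : ∀ u ∈ U, f u = 0 → u = 0) :
    Module.finrank K (U.map f) = Module.finrank K U := by
  have hrn := LinearMap.finrank_range_add_finrank_ker (f.domRestrict U)
  rw [LinearMap.range_domRestrict] at hrn
  have hker : LinearMap.ker (f.domRestrict U) = ⊥ := by
    ext ⟨u, hu⟩
    simp only [LinearMap.mem_ker, LinearMap.domRestrict_apply, Submodule.mem_bot]
    constructor
    · intro h0
      exact Subtype.ext (h u hu h0)
    · intro h0
      have : u = 0 := by simpa using congrArg Subtype.val h0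
      simp [this]
  rw [hker, finrank_bot] at hrn
  omega

lemma finrank_map_add_ker (f : M →ₗ[K] M) (U : Submodule K M) :
    Module.finrank K (U.map f)
      + Module.finrank K (LinearMap.ker (f.domRestrict U)) = Module.finrank K U := by
  have hrn := LinearMap.finrank_range_add_finrank_ker (f.domRestrict U)
  rwa [LinearMap.range_domRestrict] at hrn

lemma finrank_span_single_le (v : M) : Module.finrank K (Submodule.span K {v}) ≤ 1 := by
  have := finrank_span_le_card (R := K) ({v} : Set M)
  simpa using this.trans (by simp)

variable {α : Type*} [Fintype α] [DecidableEq α]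

lemma rk_add_ker (C : Matrix α α (ZMod 2)) (X : Finset α) :
    rk C X + Module.finrank (ZMod 2)
      (LinearMap.ker ((pad C X).mulVecLin.domRestrict (csub X))) = X.card := by
  rw [rk, ← finrank_csub X]
  exact finrank_map_add_ker _ _

lemma rk_le_card (C : Matrix α α (ZMod 2)) (X : Finset α) : rk C X ≤ X.card := by
  have := rk_add_ker C X; omega

lemma rk_eq_card_iff_ker (C : Matrix α α (ZMod 2)) (X : Finset α) :
    rk C X = X.card ↔ ∀ z ∈ csub X, (pad C X).mulVec z = 0 → z = 0 := by
  have hrn := rk_add_ker C X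
  constructor
  · intro h z hz h0
    have hk : Module.finrank (ZMod 2)
        (LinearMap.ker ((pad C X).mulVecLin.domRestrict (csub X))) = 0 := by omega
    rw [Submodule.finrank_eq_zero] at hk
    have : (⟨z, hz⟩ : csub X) ∈ LinearMap.ker ((pad C X).mulVecLin.domRestrict (csub X)) := by
      simp [LinearMap.mem_ker, Matrix.mulVecLin_apply, h0]
    rw [hk] at this
    simpa using congrArg Subtype.val this
  · intro h
    have hk : LinearMap.ker ((pad C X).mulVecLin.domRestrict (csub X)) = ⊥ := by
      ext ⟨z, hz⟩
      simp only [LinearMap.mem_ker, LinearMap.domRestrict_apply, Matrix.mulVecLin_apply,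
        Submodule.mem_bot]
      constructor
      · intro h0; exact Subtype.ext (h z hz h0)
      · intro h0
        have : z = 0 := by simpa using congrArg Subtype.val h0
        simp [this]
    rw [hk, finrank_bot] at hrn
    omega


lemma zmod2_cases (c : ZMod 2) : c = 0 ∨ c = 1 := by
  revert c; decide

lemma single_mem_csub {T : Finset α} {x : α} (hx : x ∈ T) :
    Pi.single x (1 : ZMod 2) ∈ csub T := by
  intro i hi
  have hne : i ≠ x := by rintro rfl; exact hi hx
  exact Pi.single_eq_of_ne hne 1

lemma mulVec_single_mem_cspan (C : Matrix α α (ZMod 2)) {S T : Finset α} {x : α} (hx : x ∈ T) :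
    (pad C S).mulVec (Pi.single x (1 : ZMod 2)) ∈ cspan C S T :=
  mem_cspan.2 ⟨_, single_mem_csub hx, rfl⟩

lemma cspan_le_csub (C : Matrix α α (ZMod 2)) (S T : Finset α) : cspan C S T ≤ csub S := by
  rintro v hv
  obtain ⟨z, _, rfl⟩ := mem_cspan.1 hv
  intro i hi
  simp only [Matrix.mulVec, dotProduct, pad_apply]
  apply Finset.sum_eq_zero
  intro j _
  simp [hi]

lemma pad_transpose {C : Matrix α α (ZMod 2)} (hC : C.IsSymm) (S : Finset α) :
    (pad C S)ᵀ = pad C S := by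
  ext i j
  simp only [Matrix.transpose_apply, pad_apply]
  by_cases h1 : j ∈ S
  · by_cases h2 : i ∈ S
    · simp only [h1, h2, and_self, if_true]
      exact congrFun (congrFun hC.eq j) i ▸ (Matrix.transpose_apply C j i ▸ rfl)
    · simp [h1, h2]
  · simp [h1]

lemma dot_mulVec_symm {C : Matrix α α (ZMod 2)} (hC : C.IsSymm) (S : Finset α)
    (a b : α → ZMod 2) :
    dotProduct a ((pad C S).mulVec b) = dotProduct ((pad C S).mulVec a) b := by
  rw [Matrix.dotProduct_mulVec, ← Matrix.vecMul_transpose, pad_transpose hC]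

/-- SPAN_DEL: if the column of x lies in the span of the other columns,
the rank is unchanged by deleting x. -/
lemma rk_erase_of_col_mem {C : Matrix α α (ZMod 2)} (hC : C.IsSymm) {S : Finset α} {x : α}
    (hx : x ∈ S)
    (h : (pad C S).mulVec (Pi.single x (1 : ZMod 2)) ∈ cspan C S (S.erase x)) :
    rk C (S.erase x) = rk C S := by
  have hU : cspan C S S = cspan C S (S.erase x) := by
    apply le_antisymm
    · rintro v hv
      obtain ⟨z, hz, rfl⟩ := mem_cspan.1 hv
      have hz' : z - z x • (Pi.single x (1 : ZMod 2) : α → ZMod 2) ∈ csub (S.erase x) := by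
        intro i hi
        by_cases hix : i = x
        · subst hix; simp
        · have hiS : i ∉ S := fun hiS => hi (Finset.mem_erase.2 ⟨hix, hiS⟩)
          simp [mem_csub.1 hz i hiS, Pi.single_eq_of_ne hix]
      have hdec : (pad C S).mulVec z
          = (pad C S).mulVec (z - z x • (Pi.single x (1 : ZMod 2) : α → ZMod 2))
            + z x • (pad C S).mulVec (Pi.single x (1 : ZMod 2)) := by
        rw [Matrix.mulVec_sub, Matrix.mulVec_smul]
        abel
      rw [hdec]
      exact Submodule.add_mem _ (mem_cspan.2 ⟨_, hz', rfl⟩) (Submodule.smul_mem _ _ h)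
    · exact cspan_mono C S (Finset.erase_subset _ _)
  have hsingle : Pi.single x (1 : ZMod 2) ∉ cspan C S (S.erase x) := by
    intro hw
    obtain ⟨w, hw', hwe⟩ := mem_cspan.1 hw
    obtain ⟨z, hz', hze⟩ := mem_cspan.1 h
    have path2 : dotProduct w ((pad C S).mulVec z) = 0 := by
      rw [dot_mulVec_symm hC, hwe, single_dotProduct,
        mem_csub.1 hz' x (by simp), mul_zero]
    have path1 : dotProduct w ((pad C S).mulVec z) = 1 := by
      rw [hze, dot_mulVec_symm hC, hwe, single_dotProduct, Pi.single_eq_same, one_mul]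
    rw [path2] at path1
    exact one_ne_zero path1.symm
  have hmap : cspan C (S.erase x) (S.erase x) = (cspan C S (S.erase x)).map (proj (S.erase x)) :=
    cspan_eq_map_proj C (le_refl _) (Finset.erase_subset _ _)
  have hinj : ∀ u ∈ cspan C S (S.erase x), proj (S.erase x) u = 0 → u = 0 := by
    intro u hu h0
    have husupp : u ∈ csub S := cspan_le_csub C S _ hu
    have hform : u = u x • (Pi.single x (1 : ZMod 2) : α → ZMod 2) := by
      funext i
      by_cases hix : i = x
      · subst hix; simp
      · by_cases hiS : i ∈ S
        · have h00 : proj (S.erase x) u i = 0 := by rw [h0]; rfl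
          rw [proj_apply, if_pos (Finset.mem_erase.2 ⟨hix, hiS⟩)] at h00
          simp [h00, Pi.single_eq_of_ne hix]
        · simp [mem_csub.1 husupp i hiS, Pi.single_eq_of_ne hix]
    rcases zmod2_cases (u x) with h1 | h1
    · rw [hform, h1, zero_smul]
    · rw [hform, h1, one_smul] at hu ⊢
      exact absurd hu hsingle
  show Module.finrank (ZMod 2) (cspan C (S.erase x) (S.erase x))
      = Module.finrank (ZMod 2) (cspan C S S)
  rw [hU, hmap]
  exact finrank_map_eq_of _ _ hinj

/-- DEL_SPAN: if deleting x does not change the rank, the column of x lies in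
the span of the other columns. -/
lemma col_mem_of_rk_erase {C : Matrix α α (ZMod 2)} {S : Finset α} {x : α}
    (hx : x ∈ S) (h : rk C (S.erase x) = rk C S) :
    (pad C S).mulVec (Pi.single x (1 : ZMod 2)) ∈ cspan C S (S.erase x) := by
  have h1 : rk C (S.erase x) ≤ Module.finrank (ZMod 2) (cspan C S (S.erase x)) := by
    rw [rk, cspan_eq_map_proj C (le_refl _) (Finset.erase_subset x S)]
    exact Submodule.finrank_map_le _ _
  have h2 : cspan C S (S.erase x) ≤ cspan C S S := cspan_mono C S (Finset.erase_subset _ _)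
  have hrkS : rk C S = Module.finrank (ZMod 2) (cspan C S S) := rfl
  have h3 : Module.finrank (ZMod 2) (cspan C S S)
      ≤ Module.finrank (ZMod 2) (cspan C S (S.erase x)) := by omega
  have heq : cspan C S (S.erase x) = cspan C S S := Submodule.eq_of_le_of_finrank_le h2 h3
  rw [heq]
  exact mulVec_single_mem_cspan C hx

lemma pad_eq_zero_of {C : Matrix α α (ZMod 2)} {S : Finset α}
    (h : ∀ i ∈ S, ∀ j ∈ S, C i j = 0) : pad C S = 0 := by
  ext i j
  rw [pad_apply]
  by_cases hij : i ∈ S ∧ j ∈ S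
  · simp [hij, h i hij.1 j hij.2]
  · simp [hij]

lemma rk_eq_zero_of {C : Matrix α α (ZMod 2)} {S : Finset α}
    (h : ∀ i ∈ S, ∀ j ∈ S, C i j = 0) : rk C S = 0 := by
  have : cspan C S S = ⊥ := by
    apply le_antisymm _ bot_le
    rintro v hv
    obtain ⟨z, _, rfl⟩ := mem_cspan.1 hv
    simp [pad_eq_zero_of h]
  rw [rk, this, finrank_bot]

lemma rk_pair_adj {C : Matrix α α (ZMod 2)} (heven : ∀ v, C v v = 0) {u w : α}
    (huw : u ≠ w) (hadj : C u w = 1) (hadj' : C w u = 1) : rk C {u, w} = 2 := by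
  have hcard : ({u, w} : Finset α).card = 2 := by
    rw [Finset.card_insert_of_notMem (by simp [huw]), Finset.card_singleton]
  rw [← hcard]
  rw [rk_eq_card_iff_ker]
  intro z hz h0
  have hu : u ∈ ({u, w} : Finset α) := by simp
  have hw : w ∈ ({u, w} : Finset α) := by simp
  have e1 : ((pad C {u, w}).mulVec z) u = 0 := by rw [h0]; rfl
  have e2 : ((pad C {u, w}).mulVec z) w = 0 := by rw [h0]; rfl
  rw [Matrix.mulVec, dotProduct] at e1 e2
  have hsum1 : ∑ j, pad C {u, w} u j * z j = z w := by
    rw [Finset.sum_eq_single w]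
    · simp [pad_apply, hu, hw, hadj]
    · intro b _ hbw
      by_cases hbu : b = u
      · subst hbu; simp [pad_apply, heven]
      · simp [pad_apply, show b ∉ ({u, w} : Finset α) by simp [hbu, hbw]]
    · simp
  have hsum2 : ∑ j, pad C {u, w} w j * z j = z u := by
    rw [Finset.sum_eq_single u]
    · simp [pad_apply, hu, hw, hadj']
    · intro b _ hbu
      by_cases hbw : b = w
      · subst hbw; simp [pad_apply, heven]
      · simp [pad_apply, show b ∉ ({u, w} : Finset α) by simp [hbu, hbw]]
    · simp
  funext i
  by_cases hi : i ∈ ({u, w} : Finset α)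
  · rcases Finset.mem_insert.1 hi with rfl | hi'
    · rw [← hsum2, e2]; rfl
    · rw [Finset.mem_singleton.1 hi', ← hsum1, e1]; rfl
  · exact mem_csub.1 hz i hi

lemma rk_insert_le (C : Matrix α α (ZMod 2)) (S : Finset α) (x : α) :
    rk C (insert x S) ≤ rk C S + 2 := by
  by_cases hxS : x ∈ S
  · rw [Finset.insert_eq_self.2 hxS]; omega
  set S' := insert x S with hS'
  have key : cspan C S' S' ≤ cspan C S S
      ⊔ (Submodule.span (ZMod 2) {(Pi.single x (1 : ZMod 2) : α → ZMod 2)}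
        ⊔ Submodule.span (ZMod 2) {(pad C S').mulVec (Pi.single x (1 : ZMod 2))}) := by
    rintro v hv
    obtain ⟨z, hz, rfl⟩ := mem_cspan.1 hv
    have hz' : z - z x • (Pi.single x (1 : ZMod 2) : α → ZMod 2) ∈ csub S := by
      intro i hi
      by_cases hix : i = x
      · subst hix; simp
      · have : i ∉ S' := by simp [hS', hix, hi]
        simp [mem_csub.1 hz i this, Pi.single_eq_of_ne hix]
    set z' := z - z x • (Pi.single x (1 : ZMod 2) : α → ZMod 2) with hz'def
    have hdec : (pad C S').mulVec z
        = (pad C S').mulVec z' + z x • (pad C S').mulVec (Pi.single x (1 : ZMod 2)) := by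
      rw [hz'def, Matrix.mulVec_sub, Matrix.mulVec_smul]
      abel
    have hstep : (pad C S').mulVec z'
        = (pad C S).mulVec z' + (((pad C S').mulVec z') x) • (Pi.single x (1 : ZMod 2) : α → ZMod 2) := by
      funext i
      by_cases hix : i = x
      · rw [hix]
        have hx0 : ((pad C S).mulVec z') x = 0 := by
          rw [Matrix.mulVec, dotProduct]
          apply Finset.sum_eq_zero
          intro j _
          simp [pad_apply, hxS]
        simp [hx0]
      · have hsingle : (Pi.single x (1 : ZMod 2) : α → ZMod 2) i = 0 := Pi.single_eq_of_ne hix 1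
        rw [Pi.add_apply, Pi.smul_apply, hsingle, smul_zero, add_zero]
        rw [Matrix.mulVec, Matrix.mulVec, dotProduct, dotProduct]
        apply Finset.sum_congr rfl
        intro j _
        by_cases hjx : j = x
        · subst hjx
          rw [mem_csub.1 hz' j hxS, mul_zero, mul_zero]
        · by_cases hiS : i ∈ S
          · by_cases hjS : j ∈ S
            · have hiS' : i ∈ S' := by simp [hS', hiS]
              have hjS' : j ∈ S' := by simp [hS', hjS]
              simp [pad_apply, hiS, hjS, hiS', hjS']
            · have : j ∉ S' := by simp [hS', hjx, hjS]
              simp [mem_csub.1 hz' j (fun hj => hjS hj)]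
          · have : i ∉ S' := by simp [hS', hix, hiS]
            simp [pad_apply, hiS, this]
    rw [hdec, hstep]
    apply Submodule.add_mem
    · apply Submodule.add_mem
      · exact Submodule.mem_sup_left (mem_cspan.2 ⟨_, hz', rfl⟩)
      · exact Submodule.mem_sup_right (Submodule.mem_sup_left
          (Submodule.smul_mem _ _ (Submodule.mem_span_singleton_self _)))
    · exact Submodule.mem_sup_right (Submodule.mem_sup_right
        (Submodule.smul_mem _ _ (Submodule.mem_span_singleton_self _)))
  have h1 := Submodule.finrank_mono key
  have h2 := Submodule.finrank_add_le_finrank_add_finrank (cspan C S S)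
      ((Submodule.span (ZMod 2) {(Pi.single x (1 : ZMod 2) : α → ZMod 2)}
        ⊔ Submodule.span (ZMod 2) {(pad C S').mulVec (Pi.single x (1 : ZMod 2))}))
  have h3 := Submodule.finrank_add_le_finrank_add_finrank
      (Submodule.span (ZMod 2) {(Pi.single x (1 : ZMod 2) : α → ZMod 2)})
      (Submodule.span (ZMod 2) {(pad C S').mulVec (Pi.single x (1 : ZMod 2))})
  have h4 := finrank_span_single_le (K := ZMod 2) (Pi.single x (1 : ZMod 2) : α → ZMod 2)
  have h5 := finrank_span_single_le (K := ZMod 2) ((pad C S').mulVec (Pi.single x (1 : ZMod 2)))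
  have hg : rk C S = Module.finrank (ZMod 2) (cspan C S S) := rfl
  show Module.finrank (ZMod 2) (cspan C S' S') ≤ rk C S + 2
  omega

lemma rk_union_le (C : Matrix α α (ZMod 2)) (S : Finset α) (T : Finset α) :
    rk C (S ∪ T) ≤ rk C S + 2 * T.card := by
  induction T using Finset.induction_on with
  | empty => simp
  | @insert a T ha ih =>
    have : S ∪ insert a T = insert a (S ∪ T) := by ext i; simp [or_left_comm, or_comm, or_assoc]
    rw [this, Finset.card_insert_of_notMem ha]
    have := rk_insert_le C (S ∪ T) a
    omega

lemma exists_ker_of_rk_lt {C : Matrix α α (ZMod 2)} {S : Finset α}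
    (h : rk C S ≠ S.card) :
    ∃ z ∈ csub S, (pad C S).mulVec z = 0 ∧ z ≠ 0 := by
  by_contra hcon
  push_neg at hcon
  exact h ((rk_eq_card_iff_ker C S).2 hcon)

/-- Principal rank property -/
lemma exists_subset_rk_card {C : Matrix α α (ZMod 2)} (hC : C.IsSymm) (S : Finset α) :
    ∃ X, X ⊆ S ∧ rk C X = X.card ∧ X.card = rk C S := by
  induction S using Finset.strongInductionOn with
  | _ S ih =>
    by_cases h : rk C S = S.card
    · exact ⟨S, subset_rfl, h, h.symm⟩
    · obtain ⟨z, hz, h0, hzne⟩ := exists_ker_of_rk_lt h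
      have : ∃ x, z x ≠ 0 := by
        by_contra hall
        push_neg at hall
        exact hzne (funext fun x => hall x)
      obtain ⟨x, hx0⟩ := this
      have hx1 : z x = 1 := (zmod2_cases (z x)).resolve_left hx0
      have hxS : x ∈ S := by
        by_contra hxS
        exact hx0 (mem_csub.1 hz x hxS)
      have hw : z + Pi.single x (1 : ZMod 2) ∈ csub (S.erase x) := by
        intro i hi
        by_cases hix : i = x
        · subst hix
          simp only [Pi.add_apply, Pi.single_eq_same, hx1]
          decide
        · have hiS : i ∉ S := fun hiS => hi (Finset.mem_erase.2 ⟨hix, hiS⟩)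
          simp [mem_csub.1 hz i hiS, Pi.single_eq_of_ne hix]
      have hcol : (pad C S).mulVec (Pi.single x (1 : ZMod 2)) ∈ cspan C S (S.erase x) := by
        refine mem_cspan.2 ⟨z + Pi.single x (1 : ZMod 2), hw, ?_⟩
        rw [Matrix.mulVec_add, h0, zero_add]
      have herase := rk_erase_of_col_mem hC hxS hcol
      obtain ⟨X, hX1, hX2, hX3⟩ := ih (S.erase x) (Finset.erase_ssubset hxS)
      exact ⟨X, hX1.trans (Finset.erase_subset _ _), hX2, by rw [hX3, herase]⟩

lemma pad_mulVec_apply {C : Matrix α α (ZMod 2)} {X : Finset α} {z : α → ZMod 2}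
    (hz : z ∈ csub X) {i : α} (hi : i ∈ X) :
    (pad C X).mulVec z i = ∑ j ∈ X, C i j * z j := by
  rw [Matrix.mulVec, dotProduct]
  rw [← Finset.sum_subset (Finset.subset_univ X)]
  · apply Finset.sum_congr rfl
    intro j hj
    simp [pad_apply, hi, hj]
  · intro j _ hj
    simp [mem_csub.1 hz j hj]

/-- bridge between the determinant of the subtype submatrix and the padded rank -/
lemma det_ne_zero_iff_rk (C : Matrix α α (ZMod 2)) (X : Finset α) :
    (C.submatrix (fun i : {x // x ∈ X} => (i : α)) (fun i : {x // x ∈ X} => (i : α))).det ≠ 0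
      ↔ rk C X = X.card := by
  set M := C.submatrix (fun i : {x // x ∈ X} => (i : α)) (fun i : {x // x ∈ X} => (i : α)) with hM
  rw [rk_eq_card_iff_ker]
  constructor
  · intro hdet z hz h0
    have hnov : ¬∃ v, v ≠ 0 ∧ M.mulVec v = 0 := by
      rw [Matrix.exists_mulVec_eq_zero_iff]
      exact hdet
    set v : {x // x ∈ X} → ZMod 2 := fun i => z i with hv
    have hMv : M.mulVec v = 0 := by
      funext i
      have : M.mulVec v i = ∑ j ∈ X, C i j * z j := by
        rw [Matrix.mulVec, dotProduct, ← Finset.sum_coe_sort X (fun j => C i j * z j)]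
        rfl
      rw [this, ← pad_mulVec_apply hz i.2, h0]
      rfl
    have hv0 : v = 0 := by
      by_contra hv0
      exact hnov ⟨v, hv0, hMv⟩
    funext i
    by_cases hi : i ∈ X
    · exact congrFun hv0 ⟨i, hi⟩
    · exact mem_csub.1 hz i hi
  · intro hker hdet
    rw [← Matrix.exists_mulVec_eq_zero_iff] at hdet
    obtain ⟨v, hvne, hMv⟩ := hdet
    set z : α → ZMod 2 := fun i => if h : i ∈ X then v ⟨i, h⟩ else 0 with hzdef
    have hz : z ∈ csub X := by
      intro i hi; simp [hzdef, hi]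
    have h0 : (pad C X).mulVec z = 0 := by
      funext i
      by_cases hi : i ∈ X
      · rw [pad_mulVec_apply hz hi]
        have : M.mulVec v ⟨i, hi⟩ = ∑ j ∈ X, C i j * z j := by
          rw [Matrix.mulVec, dotProduct, ← Finset.sum_coe_sort X (fun j => C i j * z j)]
          apply Finset.sum_congr rfl
          intro j _
          simp [hM, hzdef, j.2]
        rw [← this, hMv]
        rfl
      · have : (pad C X).mulVec z ∈ csub X := cspan_le_csub C X X (mem_cspan.2 ⟨z, hz, rfl⟩)
        exact mem_csub.1 this i hi
    have := hker z hz h0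
    apply hvne
    funext i
    have := congrFun this (i : α)
    simpa [hzdef, i.2] using this

/-! ### Width formula -/

lemma card_symmDiff' (A X : Finset α) :
    (symmDiff A X).card = (A \ X).card + (X \ A).card := by
  have h : symmDiff A X = (A \ X) ∪ (X \ A) := symmDiff_def A X
  rw [h]
  exact Finset.card_union_of_disjoint disjoint_sdiff_sdiff

lemma mem_feas {C : Matrix α α (ZMod 2)} {X : Finset α} :
    X ∈ feas C ↔ rk C X = X.card := by
  classical
  rw [feas, Finset.mem_filter]
  simp [Finset.mem_powerset, Finset.subset_univ, det_ne_zero_iff_rk]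

lemma empty_mem_feas (C : Matrix α α (ZMod 2)) : ∅ ∈ feas C := by
  rw [mem_feas]
  simp [rk_eq_zero_of (S := (∅ : Finset α)) (C := C) (by simp)]

lemma card_le_of_feas {C : Matrix α α (ZMod 2)} {A X : Finset α} (hX : X ∈ feas C) :
    A.card ≤ rk C A + (symmDiff A X).card := by
  have hXrk : rk C X = X.card := mem_feas.1 hX
  have h1 : rk C X ≤ rk C (A ∪ X) := rk_mono C Finset.subset_union_right
  have h2 : rk C (A ∪ X) ≤ rk C A + 2 * (X \ A).card := by
    have := rk_union_le C A (X \ A)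
    rwa [Finset.union_sdiff_self_eq_union] at this
  have h3 : (X ∩ A).card + (X \ A).card = X.card := Finset.card_inter_add_card_sdiff X A
  have h4 : (A ∩ X).card + (A \ X).card = A.card := Finset.card_inter_add_card_sdiff A X
  have h5 : (A ∩ X).card = (X ∩ A).card := by rw [Finset.inter_comm]
  have h6 := card_symmDiff' A X
  omega

lemma exists_feas_min {C : Matrix α α (ZMod 2)} (hC : C.IsSymm) (A : Finset α) :
    ∃ X ∈ feas C, (symmDiff A X).card + rk C A = A.card := by
  obtain ⟨X, hXA, hXrk, hXcard⟩ := exists_subset_rk_card hC A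
  refine ⟨X, mem_feas.2 hXrk, ?_⟩
  have hsd : symmDiff A X = A \ X := by
    ext i
    simp only [Finset.mem_symmDiff, Finset.mem_sdiff]
    constructor
    · rintro (⟨h1, h2⟩ | ⟨h1, h2⟩)
      · exact ⟨h1, h2⟩
      · exact absurd (hXA h1) h2
    · intro ⟨h1, h2⟩; exact Or.inl ⟨h1, h2⟩
  rw [hsd, ← hXcard]
  exact Finset.card_sdiff_add_card_eq_card hXA

lemma symmDiff_compl (A X : Finset α) :
    symmDiff (Finset.univ \ A) X = Finset.univ \ symmDiff A X := by
  ext i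
  simp only [Finset.mem_symmDiff, Finset.mem_sdiff, Finset.mem_univ, true_and]
  tauto

lemma widthF_eq_of_bounds {F : Finset (Finset α)} (hne : F.Nonempty) {lo hi : ℕ}
    (hlo : ∃ X ∈ F, X.card = lo) (hlo' : ∀ X ∈ F, lo ≤ X.card)
    (hhi : ∃ X ∈ F, X.card = hi) (hhi' : ∀ X ∈ F, X.card ≤ hi) :
    widthF F = hi - lo := by
  have hne' : (F.image Finset.card).Nonempty := hne.image _
  have hmax : (F.image Finset.card).max' hne' = hi := by
    apply le_antisymm
    · apply Finset.max'_le
      intro y hy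
      obtain ⟨X, hX, rfl⟩ := Finset.mem_image.1 hy
      exact hhi' X hX
    · obtain ⟨X, hX, hXc⟩ := hhi
      exact Finset.le_max' _ _ (Finset.mem_image.2 ⟨X, hX, hXc⟩)
  have hmin : (F.image Finset.card).min' hne' = lo := by
    apply le_antisymm
    · obtain ⟨X, hX, hXc⟩ := hlo
      exact Finset.min'_le _ _ (Finset.mem_image.2 ⟨X, hX, hXc⟩)
    · apply Finset.le_min'
      intro y hy
      obtain ⟨X, hX, rfl⟩ := Finset.mem_image.1 hy
      exact hlo' X hX
  rw [widthF, ← Finset.coe_max' hne', ← Finset.coe_min' hne', hmax, hmin]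
  rfl

lemma width_formula {C : Matrix α α (ZMod 2)} (hC : C.IsSymm) (A : Finset α) :
    widthF (twistF A (feas C)) = rk C A + rk C (Finset.univ \ A) := by
  have hne : (twistF A (feas C)).Nonempty :=
    ⟨symmDiff A ∅, Finset.mem_image.2 ⟨∅, empty_mem_feas C, rfl⟩⟩
  set Ac := Finset.univ \ A with hAc
  have hcompl : ∀ X : Finset α, (symmDiff Ac X).card + (symmDiff A X).card = Fintype.card α := by
    intro X
    rw [symmDiff_compl]
    rw [Finset.card_sdiff_add_card_eq_card (Finset.subset_univ _), Finset.card_univ]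
  have hcards : A.card + Ac.card = Fintype.card α := by
    rw [hAc, add_comm, Finset.card_sdiff_add_card_eq_card (Finset.subset_univ _),
      Finset.card_univ]
  have hrkA : rk C A ≤ A.card := rk_le_card C A
  have h := widthF_eq_of_bounds (lo := A.card - rk C A) (hi := A.card + rk C Ac) hne ?_ ?_ ?_ ?_
  · rw [h]; omega
  · obtain ⟨X, hX, hXc⟩ := exists_feas_min hC A
    exact ⟨symmDiff A X, Finset.mem_image.2 ⟨X, hX, rfl⟩, by omega⟩
  · rintro Y hY
    obtain ⟨X, hX, rfl⟩ := Finset.mem_image.1 hY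
    have := card_le_of_feas (A := A) hX
    omega
  · obtain ⟨X, hX, hXc⟩ := exists_feas_min hC Ac
    refine ⟨symmDiff A X, Finset.mem_image.2 ⟨X, hX, rfl⟩, ?_⟩
    have h1 := hcompl X
    have h2 : rk C Ac ≤ Ac.card := rk_le_card C Ac
    omega
  · rintro Y hY
    obtain ⟨X, hX, rfl⟩ := Finset.mem_image.1 hY
    have h1 := card_le_of_feas (A := Ac) hX
    have h2 := hcompl X
    omega


/-! ### Complete graphs -/

lemma rk_complete_even {C : Matrix α α (ZMod 2)} (hcomp : ∀ u v : α, u ≠ v → C u v = 1)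
    (heven : ∀ v, C v v = 0) {S : Finset α} (hS : Even S.card) : rk C S = S.card := by
  rw [rk_eq_card_iff_ker]
  intro z hz h0
  set σ := ∑ j ∈ S, z j with hσ
  have key : ∀ i ∈ S, z i = σ := by
    intro i hi
    have h1 : (pad C S).mulVec z i = 0 := by rw [h0]; rfl
    rw [pad_mulVec_apply hz hi] at h1
    have h2 : ∑ j ∈ S, C i j * z j = ∑ j ∈ S.erase i, z j := by
      rw [← Finset.sum_erase_add S _ hi, heven i, zero_mul, add_zero]
      apply Finset.sum_congr rfl
      intro j hj
      rw [hcomp i j (Ne.symm (Finset.ne_of_mem_erase hj)), one_mul]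
    have h3 : ∑ j ∈ S.erase i, z j + z i = σ := Finset.sum_erase_add S z hi
    rw [h2] at h1
    rw [h1, zero_add] at h3
    exact h3
  have hσ0 : σ = 0 := by
    have : σ = ∑ i ∈ S, σ := by
      rw [hσ]
      exact Finset.sum_congr rfl key
    rw [Finset.sum_const, nsmul_eq_mul] at this
    obtain ⟨m, hm⟩ := hS
    have hcast : ((S.card : ℕ) : ZMod 2) = 0 := by
      rw [hm]
      push_cast
      ring_nf
      rw [show ((2 : ZMod 2) = 0) from rfl]
      ring
    rw [hcast, zero_mul] at this
    exact this
  funext i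
  by_cases hi : i ∈ S
  · rw [key i hi, hσ0]; rfl
  · exact mem_csub.1 hz i hi

lemma rk_complete_odd {C : Matrix α α (ZMod 2)} (hcomp : ∀ u v : α, u ≠ v → C u v = 1)
    (heven : ∀ v, C v v = 0) {S : Finset α} (hS : Odd S.card) : rk C S + 1 = S.card := by
  have hSpos : 0 < S.card := by
    rcases hS with ⟨m, hm⟩; omega
  have hSne : S.Nonempty := Finset.card_pos.1 hSpos
  have hub : rk C S ≠ S.card := by
    intro heq
    rw [rk_eq_card_iff_ker] at heq
    set ind : α → ZMod 2 := fun i => if i ∈ S then 1 else 0 with hind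
    have hindmem : ind ∈ csub S := by intro i hi; simp [hind, hi]
    have h0 : (pad C S).mulVec ind = 0 := by
      funext i
      rw [Pi.zero_apply]
      by_cases hi : i ∈ S
      · rw [pad_mulVec_apply hindmem hi]
        have h2 : ∑ j ∈ S, C i j * ind j = ∑ j ∈ S.erase i, (1 : ZMod 2) := by
          rw [← Finset.sum_erase_add S _ hi, heven i, zero_mul, add_zero]
          apply Finset.sum_congr rfl
          intro j hj
          have hjS := Finset.mem_of_mem_erase hj
          rw [hcomp i j (Ne.symm (Finset.ne_of_mem_erase hj)), one_mul, hind]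
          simp [hjS]
        rw [h2, Finset.sum_const, Finset.card_erase_of_mem hi, nsmul_eq_mul, mul_one]
        obtain ⟨m, hm⟩ := hS
        rw [hm]
        have : (2 * m + 1 - 1 : ℕ) = 2 * m := by omega
        rw [this]
        push_cast
        rw [show ((2 : ZMod 2) = 0) from rfl]
        ring
      · have hmem : (pad C S).mulVec ind ∈ csub S :=
          cspan_le_csub C S S (mem_cspan.2 ⟨ind, hindmem, rfl⟩)
        exact mem_csub.1 hmem i hi
    have := heq ind hindmem h0
    obtain ⟨x, hx⟩ := hSne
    have : ind x = 0 := by rw [this]; rfl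
    rw [hind] at this
    simp [hx] at this
  have hub' : rk C S ≤ S.card := rk_le_card C S
  obtain ⟨x, hx⟩ := hSne
  have hlow : rk C (S.erase x) ≤ rk C S := rk_mono C (Finset.erase_subset _ _)
  have herase : rk C (S.erase x) = (S.erase x).card := by
    apply rk_complete_even hcomp heven
    rw [Finset.card_erase_of_mem hx]
    rcases hS with ⟨m, hm⟩
    rw [hm]
    exact ⟨m, by omega⟩
  rw [Finset.card_erase_of_mem hx] at herase
  omega


/-! ### Kernel lemmas for the converse direction -/

lemma add_self_vec (v : α → ZMod 2) : v + v = 0 := by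
  funext i
  show v i + v i = 0
  rcases zmod2_cases (v i) with h | h <;> rw [h] <;> rfl

lemma pad_eq_proj {C : Matrix α α (ZMod 2)} {S : Finset α} {z : α → ZMod 2}
    (hz : z ∈ csub S) : (pad C S).mulVec z = proj S (C.mulVec z) := by
  have := proj_pad_mulVec C (Finset.subset_univ S) hz
  rwa [pad_univ] at this

lemma K1 {C : Matrix α α (ZMod 2)}
    (hT1 : ∀ x : α, rk C (Finset.univ.erase x) = rk C Finset.univ) (x : α) :
    ∃ a : α → ZMod 2, C.mulVec a = 0 ∧ a x = 1 := by
  have hmem := col_mem_of_rk_erase (Finset.mem_univ x) (hT1 x)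
  rw [pad_univ] at hmem
  obtain ⟨z, hz, hze⟩ := mem_cspan.1 hmem
  rw [pad_univ] at hze
  refine ⟨z + Pi.single x (1 : ZMod 2), ?_, ?_⟩
  · rw [Matrix.mulVec_add, hze, add_self_vec]
  · have hzx : z x = 0 := mem_csub.1 hz x (by simp)
    rw [Pi.add_apply, hzx, Pi.single_eq_same, zero_add]

lemma K2 {C : Matrix α α (ZMod 2)} (hC : C.IsSymm)
    (hT1 : ∀ x : α, rk C (Finset.univ.erase x) = rk C Finset.univ)
    {u w : α} (huw : u ≠ w)
    (hpair : rk C ({u, w} : Finset α) + rk C (Finset.univ \ {u, w}) = rk C Finset.univ)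
    (hrkp : rk C ({u, w} : Finset α) = 2)
    {z : α → ZMod 2} (hker : C.mulVec z = 0) (hu : z u = 1) : z w = 1 := by
  rcases zmod2_cases (z w) with hw0 | hw1
  swap; · exact hw1
  exfalso
  set S := Finset.univ.erase w with hS
  have hzS : z ∈ csub S := by
    intro i hi
    have : i = w := by
      by_contra hne
      exact hi (Finset.mem_erase.2 ⟨hne, Finset.mem_univ i⟩)
    rw [this, hw0]
  have huS : u ∈ S := Finset.mem_erase.2 ⟨huw, Finset.mem_univ u⟩
  have hz'' : z + Pi.single u (1 : ZMod 2) ∈ csub (S.erase u) := by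
    intro i hi
    by_cases hiu : i = u
    · subst hiu
      rw [Pi.add_apply, hu, Pi.single_eq_same]; rfl
    · have hiS : i ∉ S := fun hmem => hi (Finset.mem_erase.2 ⟨hiu, hmem⟩)
      rw [Pi.add_apply, mem_csub.1 hzS i hiS, Pi.single_eq_of_ne hiu, add_zero]
  have hpadz : (pad C S).mulVec z = 0 := by
    rw [pad_eq_proj hzS, hker]
    funext i
    simp [proj_apply]
  have hcol : (pad C S).mulVec (Pi.single u (1 : ZMod 2)) ∈ cspan C S (S.erase u) := by
    refine mem_cspan.2 ⟨z + Pi.single u (1 : ZMod 2), hz'', ?_⟩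
    rw [Matrix.mulVec_add, hpadz, zero_add]
  have herase := rk_erase_of_col_mem hC huS hcol
  have hSu : S.erase u = Finset.univ \ {u, w} := by
    ext i
    simp [hS, Finset.mem_erase, Finset.mem_sdiff, and_comm]
  rw [hSu] at herase
  rw [hT1 w] at herase
  omega

lemma K3 {C : Matrix α α (ZMod 2)} (hC : C.IsSymm)
    (hT1 : ∀ x : α, rk C (Finset.univ.erase x) = rk C Finset.univ)
    {u w : α} (huw : u ≠ w)
    (hpair : rk C ({u, w} : Finset α) + rk C (Finset.univ \ {u, w}) = rk C Finset.univ)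
    (hrkp : rk C ({u, w} : Finset α) = 2)
    {z : α → ZMod 2} (hker : C.mulVec z = 0) : z u = z w := by
  obtain ⟨a, haker, hau⟩ := K1 hT1 u
  have haw : a w = 1 := K2 hC hT1 huw hpair hrkp haker hau
  rcases zmod2_cases (z u) with hu0 | hu1
  · rcases zmod2_cases (z w) with hw0 | hw1
    · rw [hu0, hw0]
    · exfalso
      have hza : C.mulVec (z + a) = 0 := by
        rw [Matrix.mulVec_add, hker, haker, add_zero]
      have h1 : (z + a) u = 1 := by
        rw [Pi.add_apply, hu0, hau, zero_add]
      have h2 := K2 hC hT1 huw hpair hrkp hza h1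
      rw [Pi.add_apply, hw1, haw] at h2
      exact absurd h2 (by decide)
  · rw [hu1, K2 hC hT1 huw hpair hrkp hker hu1]

lemma no_induced_path {C : Matrix α α (ZMod 2)} (hC : C.IsSymm) (heven : ∀ v, C v v = 0)
    (hall : ∀ A : Finset α, rk C A + rk C (Finset.univ \ A) = rk C Finset.univ)
    {u w v : α} (huw : u ≠ w) (hwv : w ≠ v) (huv : u ≠ v)
    (h1 : C u w = 1) (h1' : C w u = 1) (h2 : C w v = 1) (h2' : C v w = 1)
    (h3 : C u v = 0) (h3' : C v u = 0) : False := by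
  have hT1 : ∀ x : α, rk C (Finset.univ.erase x) = rk C Finset.univ := by
    intro x
    have h := hall {x}
    have h0 : rk C ({x} : Finset α) = 0 := rk_eq_zero_of (by
      intro i hi j hj
      rw [Finset.mem_singleton.1 hi, Finset.mem_singleton.1 hj]
      exact heven x)
    rw [Finset.erase_eq, Finset.sdiff_eq_inter_compl]
    rw [h0, zero_add] at h
    rw [← Finset.sdiff_eq_inter_compl]
    exact h
  -- the nonadjacent pair u v
  have hpuv : rk C ({u, v} : Finset α) = 0 := rk_eq_zero_of (by
    intro i hi j hj
    rcases Finset.mem_insert.1 hi with rfl | hi' <;>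
      rcases Finset.mem_insert.1 hj with rfl | hj'
    · exact heven _
    · rw [Finset.mem_singleton.1 hj']; exact h3
    · rw [Finset.mem_singleton.1 hi']; exact h3'
    · rw [Finset.mem_singleton.1 hi', Finset.mem_singleton.1 hj']; exact heven v)
  have hT3 : rk C (Finset.univ \ ({u, v} : Finset α)) = rk C Finset.univ := by
    have h := hall {u, v}
    rw [hpuv, zero_add] at h
    exact h
  -- adjacent pairs
  have hpuw : rk C ({u, w} : Finset α) = 2 := rk_pair_adj heven huw h1 h1'
  have hpvw : rk C ({v, w} : Finset α) = 2 := rk_pair_adj heven (Ne.symm hwv) h2' h2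
  -- DEL_SPAN in S = univ.erase u at x = v
  set S := Finset.univ.erase u with hSdef
  have hvS : v ∈ S := Finset.mem_erase.2 ⟨Ne.symm huv, Finset.mem_univ v⟩
  have hSv : S.erase v = Finset.univ \ ({u, v} : Finset α) := by
    ext i
    simp [hSdef, Finset.mem_erase, Finset.mem_sdiff, and_comm]
  have hrkeq : rk C (S.erase v) = rk C S := by
    rw [hSv, hT3, hT1 u]
  obtain ⟨t, ht, hte⟩ := mem_cspan.1 (col_mem_of_rk_erase hvS hrkeq)
  set z' := t + Pi.single v (1 : ZMod 2) with hz'def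
  have hz'S : z' ∈ csub S := by
    apply Submodule.add_mem
    · exact csub_mono (Finset.erase_subset _ _) ht
    · exact single_mem_csub hvS
  have hpadz' : (pad C S).mulVec z' = 0 := by
    rw [hz'def, Matrix.mulVec_add, hte, add_self_vec]
  have hproj : proj S (C.mulVec z') = 0 := by
    rw [← pad_eq_proj hz'S, hpadz']
  have hz'v : z' v = 1 := by
    have htv : t v = 0 := mem_csub.1 ht v (by simp)
    rw [hz'def, Pi.add_apply, htv, Pi.single_eq_same, zero_add]
  have hz'u : z' u = 0 := mem_csub.1 hz'S u (by simp [hSdef])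
  have hCz' : ∀ i, i ≠ u → C.mulVec z' i = 0 := by
    intro i hi
    have : proj S (C.mulVec z') i = 0 := by rw [hproj]; rfl
    rwa [proj_apply, if_pos (Finset.mem_erase.2 ⟨hi, Finset.mem_univ i⟩)] at this
  rcases zmod2_cases (C.mulVec z' u) with hc | hc
  · -- z' is in the kernel
    have hker : C.mulVec z' = 0 := by
      funext i
      by_cases hiu : i = u
      · rw [hiu, hc]; rfl
      · rw [hCz' i hiu]; rfl
    have e1 : z' u = z' w := K3 hC hT1 huw (hall {u, w}) hpuw hker
    have e2 : z' v = z' w := K3 hC hT1 (Ne.symm hwv) (hall {v, w}) hpvw hker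
    rw [hz'u] at e1
    rw [hz'v] at e2
    rw [← e1] at e2
    exact absurd e2 (by decide)
  · -- C z' = single u
    obtain ⟨a, haker, hau⟩ := K1 hT1 u
    have hsingle : C.mulVec z' = Pi.single u (1 : ZMod 2) := by
      funext i
      by_cases hiu : i = u
      · rw [hiu, hc, Pi.single_eq_same]
      · rw [hCz' i hiu, Pi.single_eq_of_ne hiu]
    have hdot : dotProduct a (C.mulVec z') = dotProduct (C.mulVec a) z' := by
      have := dot_mulVec_symm hC Finset.univ a z'
      rwa [pad_univ] at this
    rw [hsingle, haker, dotProduct_single, zero_dotProduct] at hdot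
    rw [mul_one] at hdot
    rw [hau] at hdot
    exact absurd hdot (by decide)

lemma T1_of_hall {C : Matrix α α (ZMod 2)} (heven : ∀ v, C v v = 0)
    (hall : ∀ A : Finset α, rk C A + rk C (Finset.univ \ A) = rk C Finset.univ) (x : α) :
    rk C (Finset.univ.erase x) = rk C Finset.univ := by
  have h := hall {x}
  have h0 : rk C ({x} : Finset α) = 0 := rk_eq_zero_of (by
    intro i hi j hj
    rw [Finset.mem_singleton.1 hi, Finset.mem_singleton.1 hj]
    exact heven x)
  rw [h0, zero_add] at h
  rw [Finset.erase_eq]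
  exact h

lemma adj_iff {C : Matrix α α (ZMod 2)} (hC : C.IsSymm) {a b : α} :
    (iGraph C).Adj a b ↔ (a ≠ b ∧ C a b = 1) := by
  have hsym : C b a = C a b := congrFun (congrFun hC a) b
  constructor
  · rintro ⟨h1, h2 | h2⟩
    · exact ⟨h1, h2⟩
    · exact ⟨h1, by rwa [hsym] at h2⟩
  · rintro ⟨h1, h2⟩
    exact ⟨h1, Or.inl h2⟩

lemma exists_P3 {C : Matrix α α (ZMod 2)} (hconn : (iGraph C).Connected)
    {p q : α} (hpq : p ≠ q) (hnadj : ¬ (iGraph C).Adj p q) :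
    ∃ u w v : α, (iGraph C).Adj u w ∧ (iGraph C).Adj w v ∧ u ≠ v ∧ ¬ (iGraph C).Adj u v := by
  by_contra hno
  push_neg at hno
  have key : ∀ (a b : α) (wk : (iGraph C).Walk a b), a = b ∨ (iGraph C).Adj a b := by
    intro a b wk
    induction wk with
    | nil => exact Or.inl rfl
    | @cons x y z hxy p ih =>
      rcases ih with rfl | hadj
      · exact Or.inr hxy
      · by_cases hxz : x = z
        · exact Or.inl hxz
        · exact Or.inr (hno x y z hxy hadj hxz)
  obtain ⟨wk⟩ := hconn p q
  rcases key p q wk with rfl | hadj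
  · exact hpq rfl
  · exact hnadj hadj

end TwAux


/-- For a connected even normal binary delta-matroid, the twist polynomial is a
monomial iff the intersection graph is a complete graph of odd order. -/
theorem monomial_iff_complete_odd {α : Type*} [Fintype α] [DecidableEq α]
    (C : Matrix α α (ZMod 2)) (hC : C.IsSymm) (heven : ∀ v, C v v = 0)
    (hconn : (iGraph C).Connected) :
    (∃ k, ∀ A ∈ (Finset.univ : Finset α).powerset, widthF (twistF A (feas C)) = k) ↔
      ((∀ u v : α, u ≠ v → C u v = 1) ∧ Odd (Fintype.card α)) := by
  classical
  constructor
  · rintro ⟨k, hk⟩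
    have hall : ∀ A : Finset α,
        TwAux.rk C A + TwAux.rk C (Finset.univ \ A) = TwAux.rk C Finset.univ := by
      intro A
      have h1 := hk A (Finset.mem_powerset.2 (Finset.subset_univ A))
      have h2 := hk ∅ (Finset.mem_powerset.2 (Finset.subset_univ ∅))
      rw [TwAux.width_formula hC] at h1 h2
      have h3 : TwAux.rk C (∅ : Finset α) = 0 := TwAux.rk_eq_zero_of (by simp)
      rw [Finset.sdiff_empty] at h2
      omega
    have hcomp : ∀ u v : α, u ≠ v → C u v = 1 := by
      by_contra hnc
      push_neg at hnc
      obtain ⟨p, q, hpq, hCpq1⟩ := hnc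
      have hCpq : C p q = 0 := (TwAux.zmod2_cases _).resolve_right hCpq1
      have hnadj : ¬ (iGraph C).Adj p q := by
        rw [TwAux.adj_iff hC]
        rintro ⟨-, h⟩
        rw [hCpq] at h
        exact absurd h (by decide)
      obtain ⟨u, w, v, huw, hwv, huv, hnuv⟩ := TwAux.exists_P3 hconn hpq hnadj
      obtain ⟨huw1, huw2⟩ := (TwAux.adj_iff hC).1 huw
      obtain ⟨hwv1, hwv2⟩ := (TwAux.adj_iff hC).1 hwv
      have hsym : ∀ a b : α, C b a = C a b := fun a b => congrFun (congrFun hC a) b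
      have huv2 : C u v = 0 := by
        rcases TwAux.zmod2_cases (C u v) with h | h
        · exact h
        · exact absurd ((TwAux.adj_iff hC).2 ⟨huv, h⟩) hnuv
      exact TwAux.no_induced_path hC heven hall huw1 hwv1 huv
        huw2 (hsym u w ▸ huw2) hwv2 (hsym w v ▸ hwv2) huv2 (hsym u v ▸ huv2)
    refine ⟨hcomp, ?_⟩
    rcases Nat.even_or_odd (Fintype.card α) with hev | hodd
    · exfalso
      have hn : TwAux.rk C Finset.univ = Fintype.card α := by
        have := TwAux.rk_complete_even hcomp heven
          (S := (Finset.univ : Finset α)) (by rwa [Finset.card_univ])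
        rwa [Finset.card_univ] at this
      obtain ⟨x⟩ := hconn.nonempty
      have hT1 := TwAux.T1_of_hall heven hall x
      have hle := TwAux.rk_le_card C (Finset.univ.erase x)
      rw [Finset.card_erase_of_mem (Finset.mem_univ x), Finset.card_univ] at hle
      have hpos : 0 < Fintype.card α := Fintype.card_pos_iff.2 ⟨x⟩
      omega
    · exact hodd
  · rintro ⟨hcomp, hodd⟩
    refine ⟨Fintype.card α - 1, fun A hA => ?_⟩
    rw [TwAux.width_formula hC]
    have hcards : A.card + (Finset.univ \ A).card = Fintype.card α := by
      rw [add_comm, Finset.card_sdiff_add_card_eq_card (Finset.subset_univ _), Finset.card_univ]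
    obtain ⟨m, hm⟩ := hodd
    rcases Nat.even_or_odd A.card with hev | hodd'
    · obtain ⟨l, hl⟩ := hev
      have r1 := TwAux.rk_complete_even hcomp heven (S := A) ⟨l, hl⟩
      have r2 := TwAux.rk_complete_odd hcomp heven (S := Finset.univ \ A)
        ⟨m - l, by omega⟩
      omega
    · obtain ⟨l, hl⟩ := hodd'
      have r1 := TwAux.rk_complete_odd hcomp heven (S := A) ⟨l, hl⟩
      have r2 := TwAux.rk_complete_even hcomp heven (S := Finset.univ \ A)
        ⟨m - l, by omega⟩
      omega
end
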